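/- arXiv:1809.02100 — 8 statements merged into one kernel-verified Lean document; each statement's English description precedes it below -/
import Mathlib

section
/- Let G be a 3-uniform hypergraph on n vertices such that no 3 edges of G span at most 5 vertices (i.e., G contains no subgraph with 5 vertices and 3 edges). Then the number of edges of G is at most n(n-1)/5, and in particular at most n²/5. -/
/-!
Through any pair of vertices pass at most two edges, since three edges through a common pair
span at most `2 + 1 + 1 + 1` vertices. Moreover, an edge `e` has at most one pair lying in a second
edge: two such pairs would give edges `f₁, f₂` with `#(fᵢ \ e) ≤ 1`, so `e, f₁, f₂` span at most
five vertices. Writing `d p` for the codegree of a pair, the weight `3 - d p` is therefore at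
least `2 + 2 + 1 = 5` summed over the three pairs of an edge, while `d p * (3 - d p) ≤ 2` for every
pair. Double counting pairs inside edges gives `5 * #G ≤ 2 * (n choose 2) = n * (n - 1)`.
-/

open Finset

variable {α : Type*} [DecidableEq α]

def NoThreeEdgesOnFiveVertices (G : Finset (Finset α)) : Prop :=
  ∀ e₁ ∈ G, ∀ e₂ ∈ G, ∀ e₃ ∈ G, e₁ ≠ e₂ → e₁ ≠ e₃ → e₂ ≠ e₃ → 5 < #(e₁ ∪ e₂ ∪ e₃)

def codegree (G : Finset (Finset α)) (p : Finset α) : ℕ := #{e ∈ G | p ⊆ e}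

lemma card_union_union_le (e f g : Finset α) : #(e ∪ f ∪ g) ≤ #e + #(f \ e) + #(g \ e) := by
  calc #(e ∪ f ∪ g) = #(e ∪ (f \ e) ∪ (g \ e)) := by
        rw [union_sdiff_self_eq_union, union_right_comm e f g, union_right_comm e f (g \ e),
          union_sdiff_self_eq_union]
    _ ≤ #e + #(f \ e) + #(g \ e) := (card_union_le _ _).trans (by gcongr; exact card_union_le _ _)

lemma card_sdiff_le_one_of_pair_subset {e f p : Finset α} (hf : #f = 3) (hp : #p = 2)
    (hpf : p ⊆ f) (hpe : p ⊆ e) : #(f \ e) ≤ 1 := by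
  calc #(f \ e) ≤ #(f \ p) := card_le_card (sdiff_subset_sdiff le_rfl hpe)
    _ = 1 := by rw [card_sdiff_of_subset hpf, hf, hp]

lemma eq_of_two_pairs_subset {e f p₁ p₂ : Finset α} (he : #e = 3) (hf : #f = 3)
    (hp₁ : #p₁ = 2) (hp₂ : #p₂ = 2) (hne : p₁ ≠ p₂)
    (h₁e : p₁ ⊆ e) (h₂e : p₂ ⊆ e) (h₁f : p₁ ⊆ f) (h₂f : p₂ ⊆ f) : e = f := by
  have hunion : 3 ≤ #(p₁ ∪ p₂) := by
    by_contra! h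
    have h₁ := eq_of_subset_of_card_le (subset_union_left : p₁ ⊆ p₁ ∪ p₂) (by omega)
    have h₂ := eq_of_subset_of_card_le (subset_union_right : p₂ ⊆ p₁ ∪ p₂) (by omega)
    exact hne (h₁.trans h₂.symm)
  have hinter : e ∩ f = e := eq_of_subset_of_card_le inter_subset_left
    (he ▸ hunion.trans (card_le_card (union_subset (subset_inter h₁e h₁f) (subset_inter h₂e h₂f))))
  exact eq_of_subset_of_card_le (inter_eq_left.mp hinter) (by omega)

section Hypergraph

variable {G : Finset (Finset α)}

lemma codegree_pos {e p : Finset α} (he : e ∈ G) (hpe : p ⊆ e) : 0 < codegree G p :=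
  card_pos.mpr ⟨e, mem_filter.mpr ⟨he, hpe⟩⟩

lemma exists_ne_mem_of_two_le_codegree {p : Finset α} (hp : 2 ≤ codegree G p)
    (e : Finset α) : ∃ f ∈ G, p ⊆ f ∧ f ≠ e := by
  obtain ⟨f, hf, hfe⟩ := exists_mem_ne (s := {e ∈ G | p ⊆ e}) hp e
  exact ⟨f, (mem_filter.mp hf).1, (mem_filter.mp hf).2, hfe⟩

lemma eq_or_eq_or_eq_of_card_sdiff_le_one (hG : (G : Set (Finset α)).Sized 3)
    (hfree : NoThreeEdgesOnFiveVertices G) {e f g : Finset α} (he : e ∈ G) (hf : f ∈ G)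
    (hg : g ∈ G) (hfe : #(f \ e) ≤ 1) (hge : #(g \ e) ≤ 1) : e = f ∨ e = g ∨ f = g := by
  by_contra! h
  have hspan := hfree e he f hf g hg h.1 h.2.1 h.2.2
  have hle := card_union_union_le e f g
  rw [hG he] at hle
  omega

lemma codegree_le_two (hG : (G : Set (Finset α)).Sized 3)
    (hfree : NoThreeEdgesOnFiveVertices G) {p : Finset α} (hp : #p = 2) : codegree G p ≤ 2 := by
  by_contra! h
  obtain ⟨e₁, he₁, e₂, he₂, e₃, he₃, h₁₂, h₁₃, h₂₃⟩ := two_lt_card.mp h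
  rw [mem_filter] at he₁ he₂ he₃
  rcases eq_or_eq_or_eq_of_card_sdiff_le_one hG hfree he₁.1 he₂.1 he₃.1
    (card_sdiff_le_one_of_pair_subset (hG he₂.1) hp he₂.2 he₁.2)
    (card_sdiff_le_one_of_pair_subset (hG he₃.1) hp he₃.2 he₁.2) with h | h | h
  exacts [h₁₂ h, h₁₃ h, h₂₃ h]

lemma card_filter_two_le_codegree_le_one (hG : (G : Set (Finset α)).Sized 3)
    (hfree : NoThreeEdgesOnFiveVertices G) {e : Finset α} (he : e ∈ G) :
    #{p ∈ e.powersetCard 2 | 2 ≤ codegree G p} ≤ 1 := by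
  refine card_le_one.mpr fun p₁ hp₁ p₂ hp₂ => ?_
  by_contra hne
  simp only [mem_filter, mem_powersetCard] at hp₁ hp₂
  obtain ⟨⟨h₁e, hp₁⟩, hd₁⟩ := hp₁
  obtain ⟨⟨h₂e, hp₂⟩, hd₂⟩ := hp₂
  obtain ⟨f₁, hf₁, h₁f, hf₁e⟩ := exists_ne_mem_of_two_le_codegree hd₁ e
  obtain ⟨f₂, hf₂, h₂f, hf₂e⟩ := exists_ne_mem_of_two_le_codegree hd₂ e
  rcases eq_or_eq_or_eq_of_card_sdiff_le_one hG hfree he hf₁ hf₂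
    (card_sdiff_le_one_of_pair_subset (hG hf₁) hp₁ h₁f h₁e)
    (card_sdiff_le_one_of_pair_subset (hG hf₂) hp₂ h₂f h₂e) with h | h | rfl
  · exact hf₁e h.symm
  · exact hf₂e h.symm
  · exact hf₁e (eq_of_two_pairs_subset (hG he) (hG hf₁) hp₁ hp₂ hne h₁e h₂e h₁f h₂f).symm

lemma five_le_sum_three_sub_codegree (hG : (G : Set (Finset α)).Sized 3)
    (hfree : NoThreeEdgesOnFiveVertices G) {e : Finset α} (he : e ∈ G) :
    5 ≤ ∑ p ∈ e.powersetCard 2, (3 - codegree G p) := by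
  have hpair : ∀ p ∈ e.powersetCard 2,
      2 ≤ (3 - codegree G p) + if 2 ≤ codegree G p then 1 else 0 := by
    intro p hp
    rw [mem_powersetCard] at hp
    have := codegree_pos he hp.1
    have := codegree_le_two hG hfree hp.2
    split_ifs <;> omega
  have hsum := sum_le_sum hpair
  rw [sum_add_distrib, ← card_filter, sum_const, card_powersetCard, hG he] at hsum
  have := card_filter_two_le_codegree_le_one hG hfree he
  rw [smul_eq_mul, show Nat.choose 3 2 = 3 from rfl] at hsum
  omega

end Hypergraph

lemma sum_sum_powersetCard_eq_sum_codegree_mul [Fintype α] (G : Finset (Finset α)) (k : ℕ)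
    (w : Finset α → ℕ) :
    ∑ e ∈ G, ∑ p ∈ e.powersetCard k, w p = ∑ p ∈ univ.powersetCard k, codegree G p * w p := by
  rw [sum_comm' (t' := univ.powersetCard k) (s' := fun p => {e ∈ G | p ⊆ e})]
  · simp only [sum_const, smul_eq_mul, codegree]
  · intro e p
    simp only [mem_powersetCard, mem_filter, subset_univ, true_and]
    tauto

theorem five_mul_card_le_two_mul_choose [Fintype α] {G : Finset (Finset α)}
    (hG : (G : Set (Finset α)).Sized 3) (hfree : NoThreeEdgesOnFiveVertices G) :
    5 * #G ≤ 2 * (Fintype.card α).choose 2 :=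
  calc 5 * #G = ∑ _e ∈ G, 5 := by rw [sum_const, smul_eq_mul, mul_comm]
    _ ≤ ∑ e ∈ G, ∑ p ∈ e.powersetCard 2, (3 - codegree G p) :=
        sum_le_sum fun _e he => five_le_sum_three_sub_codegree hG hfree he
    _ = ∑ p ∈ univ.powersetCard 2, codegree G p * (3 - codegree G p) :=
        sum_sum_powersetCard_eq_sum_codegree_mul G 2 _
    _ ≤ ∑ _p ∈ univ.powersetCard 2, 2 := sum_le_sum fun p hp => by
        have := codegree_le_two hG hfree (mem_powersetCard.mp hp).2
        interval_cases codegree G p <;> norm_num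
    _ = 2 * (Fintype.card α).choose 2 := by
        rw [sum_const, card_powersetCard, card_univ, smul_eq_mul, mul_comm]

/-- Upper bound: an `F⁽³⁾(5,3)`-free 3-uniform hypergraph on `n` vertices has at most
`n(n-1)/5` edges, in particular at most `n²/5` edges. -/
theorem stmt_1 (n : ℕ) (G : Finset (Finset (Fin n)))
    (h3 : ∀ e ∈ G, e.card = 3)
    (hfree : ∀ e₁ ∈ G, ∀ e₂ ∈ G, ∀ e₃ ∈ G,
      e₁ ≠ e₂ → e₁ ≠ e₃ → e₂ ≠ e₃ → 5 < (e₁ ∪ e₂ ∪ e₃).card) :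
    5 * G.card ≤ n * (n - 1) ∧ 5 * G.card ≤ n ^ 2 := by
  have h := five_mul_card_le_two_mul_choose (fun e he => h3 e he) hfree
  rw [Fintype.card_fin, Nat.choose_two_right, Nat.mul_div_cancel' n.even_mul_pred_self.two_dvd] at h
  exact ⟨h, h.trans (sq n ▸ Nat.mul_le_mul_left n (Nat.sub_le n 1))⟩
end

section
/- Let G be a 3-uniform hypergraph in which no 3 edges span at most 5 vertices. Let G₁ be the set of vertex pairs with codegree exactly 1 and G₂ the set of pairs with codegree exactly 2. Then |G₁| ≥ 4·|G₂|. -/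
open Finset

private lemma union_small {V : Type} [DecidableEq V] {G : Finset (Finset V)}
    (h3 : ∀ e ∈ G, e.card = 3)
    (hfree : ∀ e₁ ∈ G, ∀ e₂ ∈ G, ∀ e₃ ∈ G,
      e₁ ≠ e₂ → e₁ ≠ e₃ → e₂ ≠ e₃ → 5 < (e₁ ∪ e₂ ∪ e₃).card)
    {e₁ e₂ e₃ : Finset V} (he₁ : e₁ ∈ G) (he₂ : e₂ ∈ G) (he₃ : e₃ ∈ G)
    (h12 : e₁ ≠ e₂) (h13 : e₁ ≠ e₃) (h23 : e₂ ≠ e₃)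
    (hi : 2 ≤ (e₁ ∩ e₂).card) (hu : 2 ≤ ((e₁ ∪ e₂) ∩ e₃).card) : False := by
  have h5 := hfree e₁ he₁ e₂ he₂ e₃ he₃ h12 h13 h23
  have c1 := Finset.card_union_add_card_inter e₁ e₂
  have c2 := Finset.card_union_add_card_inter (e₁ ∪ e₂) e₃
  rw [h3 e₁ he₁, h3 e₂ he₂] at c1
  rw [h3 e₃ he₃] at c2
  omega

private lemma inter_eq {V : Type} [DecidableEq V] {G : Finset (Finset V)}
    (h3 : ∀ e ∈ G, e.card = 3) {p e₁ e₂ : Finset V}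
    (he₁ : e₁ ∈ G) (he₂ : e₂ ∈ G) (h12 : e₁ ≠ e₂) (hpc : p.card = 2)
    (h1 : p ⊆ e₁) (h2 : p ⊆ e₂) : p = e₁ ∩ e₂ := by
  have hsub : p ⊆ e₁ ∩ e₂ := Finset.subset_inter h1 h2
  have hle : (e₁ ∩ e₂).card ≤ 2 := by
    by_contra h
    push_neg at h
    have h1' : e₁ ∩ e₂ = e₁ :=
      Finset.eq_of_subset_of_card_le Finset.inter_subset_left (by rw [h3 e₁ he₁]; omega)
    have h2' : e₁ ⊆ e₂ := by rw [← h1']; exact Finset.inter_subset_right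
    exact h12 (Finset.eq_of_subset_of_card_le h2' (by rw [h3 e₁ he₁, h3 e₂ he₂]))
  exact Finset.eq_of_subset_of_card_le hsub (by omega)

private lemma codeg_one {V : Type} [DecidableEq V] {G : Finset (Finset V)}
    (h3 : ∀ e ∈ G, e.card = 3)
    (hfree : ∀ e₁ ∈ G, ∀ e₂ ∈ G, ∀ e₃ ∈ G,
      e₁ ≠ e₂ → e₁ ≠ e₃ → e₂ ≠ e₃ → 5 < (e₁ ∪ e₂ ∪ e₃).card)
    {p e₁ e₂ : Finset V} (he₁ : e₁ ∈ G) (he₂ : e₂ ∈ G) (h12 : e₁ ≠ e₂)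
    (hp : p = e₁ ∩ e₂) (hpc : p.card = 2)
    {q : Finset V} (hq2 : q.card = 2) (hqp : q ≠ p) (hqe : q ⊆ e₁) :
    (G.filter (fun e => q ⊆ e)).card = 1 := by
  rw [Finset.card_eq_one]
  refine ⟨e₁, ?_⟩
  ext e₃
  simp only [Finset.mem_filter, Finset.mem_singleton]
  constructor
  · rintro ⟨he₃, hqe₃⟩
    by_contra hne
    by_cases h32 : e₃ = e₂
    · subst h32
      apply hqp
      have hs : q ⊆ p := by rw [hp]; exact Finset.subset_inter hqe hqe₃
      exact Finset.eq_of_subset_of_card_le hs (by omega)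
    · refine union_small h3 hfree he₁ he₂ he₃ h12 (fun h => hne h.symm) (fun h => h32 h.symm)
        (by rw [← hp]; omega) ?_
      have hs : q ⊆ (e₁ ∪ e₂) ∩ e₃ :=
        Finset.subset_inter (hqe.trans Finset.subset_union_left) hqe₃
      have := Finset.card_le_card hs
      omega
  · rintro rfl; exact ⟨he₁, hqe⟩

private lemma other_edge {V : Type} [DecidableEq V] {G : Finset (Finset V)} {p e₀ : Finset V}
    (hdeg : (G.filter (fun e => p ⊆ e)).card = 2) (he₀ : e₀ ∈ G) (hpe₀ : p ⊆ e₀) :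
    ∃ e₁ ∈ G, p ⊆ e₁ ∧ e₁ ≠ e₀ := by
  obtain ⟨f₁, f₂, hne, hE⟩ := Finset.card_eq_two.mp hdeg
  have hf₁ : f₁ ∈ G.filter (fun e => p ⊆ e) := by rw [hE]; simp
  have hf₂ : f₂ ∈ G.filter (fun e => p ⊆ e) := by rw [hE]; simp
  rw [Finset.mem_filter] at hf₁ hf₂
  have h₀ : e₀ ∈ ({f₁, f₂} : Finset (Finset V)) := by
    rw [← hE, Finset.mem_filter]; exact ⟨he₀, hpe₀⟩
  simp only [Finset.mem_insert, Finset.mem_singleton] at h₀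
  rcases h₀ with rfl | rfl
  · exact ⟨f₂, hf₂.1, hf₂.2, hne.symm⟩
  · exact ⟨f₁, hf₁.1, hf₁.2, hne⟩

/-- In an `F⁽³⁾(5,3)`-free 3-uniform hypergraph, the number of pairs of codegree 1 is at
least 4 times the number of pairs of codegree 2. -/
theorem stmt_2 {V : Type} [Fintype V] [DecidableEq V] (G : Finset (Finset V))
    (h3 : ∀ e ∈ G, e.card = 3)
    (hfree : ∀ e₁ ∈ G, ∀ e₂ ∈ G, ∀ e₃ ∈ G,
      e₁ ≠ e₂ → e₁ ≠ e₃ → e₂ ≠ e₃ → 5 < (e₁ ∪ e₂ ∪ e₃).card) :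
    4 * ((Finset.univ.powersetCard 2).filter
          (fun p : Finset V => (G.filter (fun e => p ⊆ e)).card = 2)).card ≤
      ((Finset.univ.powersetCard 2).filter
          (fun p : Finset V => (G.filter (fun e => p ⊆ e)).card = 1)).card := by
  classical
  set t2 := ((Finset.univ.powersetCard 2).filter
          (fun p : Finset V => (G.filter (fun e => p ⊆ e)).card = 2)) with ht2
  set t1 := ((Finset.univ.powersetCard 2).filter
          (fun p : Finset V => (G.filter (fun e => p ⊆ e)).card = 1)) with ht1
  have key : t2.card * 4 ≤ t1.card * 1 := by
    apply Finset.card_mul_le_card_mul (fun p q => p ≠ q ∧ ∃ e ∈ G, p ⊆ e ∧ q ⊆ e)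
    · -- each codegree-2 pair has ≥ 4 neighbours in t1
      intro p hp
      rw [ht2, Finset.mem_filter, Finset.mem_powersetCard] at hp
      obtain ⟨⟨-, hpc⟩, hdeg⟩ := hp
      obtain ⟨e₁, e₂, h12, hE⟩ := Finset.card_eq_two.mp hdeg
      have he₁ : e₁ ∈ G ∧ p ⊆ e₁ := by
        have : e₁ ∈ G.filter (fun e => p ⊆ e) := by rw [hE]; simp
        simpa using this
      have he₂ : e₂ ∈ G ∧ p ⊆ e₂ := by
        have : e₂ ∈ G.filter (fun e => p ⊆ e) := by rw [hE]; simp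
        simpa using this
      have hp12 : p = e₁ ∩ e₂ := inter_eq h3 he₁.1 he₂.1 h12 hpc he₁.2 he₂.2
      set S := (e₁.powersetCard 2 ∪ e₂.powersetCard 2).erase p with hS
      have hA : (e₁.powersetCard 2).card = 3 := by
        rw [Finset.card_powersetCard, h3 e₁ he₁.1]; rfl
      have hB : (e₂.powersetCard 2).card = 3 := by
        rw [Finset.card_powersetCard, h3 e₂ he₂.1]; rfl
      have hAB : e₁.powersetCard 2 ∩ e₂.powersetCard 2 = {p} := by
        ext q
        simp only [Finset.mem_inter, Finset.mem_powersetCard, Finset.mem_singleton]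
        constructor
        · rintro ⟨⟨hq1, hq2⟩, hq3, -⟩
          have hs : q ⊆ p := by rw [hp12]; exact Finset.subset_inter hq1 hq3
          exact Finset.eq_of_subset_of_card_le hs (by omega)
        · rintro rfl; exact ⟨⟨he₁.2, hpc⟩, he₂.2, hpc⟩
      have hpU : p ∈ e₁.powersetCard 2 ∪ e₂.powersetCard 2 := by
        rw [Finset.mem_union, Finset.mem_powersetCard]
        exact Or.inl ⟨he₁.2, hpc⟩
      have hU : (e₁.powersetCard 2 ∪ e₂.powersetCard 2).card = 5 := by
        have := Finset.card_union_add_card_inter (e₁.powersetCard 2) (e₂.powersetCard 2)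
        rw [hAB, hA, hB, Finset.card_singleton] at this
        omega
      have hScard : S.card = 4 := by
        rw [hS, Finset.card_erase_of_mem hpU, hU]
      have hSsub : S ⊆ t1.bipartiteAbove (fun p q => p ≠ q ∧ ∃ e ∈ G, p ⊆ e ∧ q ⊆ e) p := by
        intro q hq
        rw [hS, Finset.mem_erase, Finset.mem_union, Finset.mem_powersetCard,
          Finset.mem_powersetCard] at hq
        obtain ⟨hqp, hq'⟩ := hq
        rw [Finset.mem_bipartiteAbove]
        rcases hq' with ⟨hqe, hq2⟩ | ⟨hqe, hq2⟩
        · refine ⟨?_, fun h => hqp h.symm, e₁, he₁.1, he₁.2, hqe⟩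
          rw [ht1, Finset.mem_filter, Finset.mem_powersetCard]
          exact ⟨⟨Finset.subset_univ q, hq2⟩,
            codeg_one h3 hfree he₁.1 he₂.1 h12 hp12 hpc hq2 hqp hqe⟩
        · refine ⟨?_, fun h => hqp h.symm, e₂, he₂.1, he₂.2, hqe⟩
          rw [ht1, Finset.mem_filter, Finset.mem_powersetCard]
          refine ⟨⟨Finset.subset_univ q, hq2⟩, ?_⟩
          exact codeg_one h3 hfree he₂.1 he₁.1 h12.symm
            (by rw [hp12, Finset.inter_comm]) hpc hq2 hqp hqe
      calc 4 = S.card := hScard.symm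
        _ ≤ _ := Finset.card_le_card hSsub
    · -- each codegree-1 pair has ≤ 1 neighbour in t2
      intro q hq
      rw [Finset.card_le_one]
      intro p hpmem p' hp'mem
      rw [Finset.mem_bipartiteBelow] at hpmem hp'mem
      obtain ⟨hps, hpq, e, heG, hpe, hqe⟩ := hpmem
      obtain ⟨hp's, hp'q, e', he'G, hp'e, hqe'⟩ := hp'mem
      rw [ht1, Finset.mem_filter, Finset.mem_powersetCard] at hq
      obtain ⟨⟨-, hqc⟩, hqdeg⟩ := hq
      obtain ⟨e₀, hE₀⟩ := Finset.card_eq_one.mp hqdeg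
      have he₀ : e₀ ∈ G ∧ q ⊆ e₀ := by
        have : e₀ ∈ G.filter (fun e => q ⊆ e) := by rw [hE₀]; simp
        simpa using this
      have hee₀ : e = e₀ := by
        have : e ∈ G.filter (fun e => q ⊆ e) := Finset.mem_filter.mpr ⟨heG, hqe⟩
        rwa [hE₀, Finset.mem_singleton] at this
      have he'e₀ : e' = e₀ := by
        have : e' ∈ G.filter (fun e => q ⊆ e) := Finset.mem_filter.mpr ⟨he'G, hqe'⟩
        rwa [hE₀, Finset.mem_singleton] at this
      rw [hee₀] at hpe heG
      rw [he'e₀] at hp'e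
      rw [ht2, Finset.mem_filter, Finset.mem_powersetCard] at hps hp's
      obtain ⟨⟨-, hpc⟩, hpdeg⟩ := hps
      obtain ⟨⟨-, hp'c⟩, hp'deg⟩ := hp's
      obtain ⟨e₁, he₁G, hpe₁, hne₁⟩ := other_edge hpdeg heG hpe
      obtain ⟨e₂, he₂G, hp'e₂, hne₂⟩ := other_edge hp'deg heG hp'e
      by_contra hpp'
      have h12 : e₁ ≠ e₂ := by
        rintro rfl
        have hcap : (p ∩ p').card ≤ 1 := by
          by_contra h
          push_neg at h
          have h1 : p ∩ p' = p :=
            Finset.eq_of_subset_of_card_le Finset.inter_subset_left (by omega)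
          have h2 : p ∩ p' = p' :=
            Finset.eq_of_subset_of_card_le Finset.inter_subset_right (by omega)
          exact hpp' (by rw [← h1, h2])
        have hcup : 3 ≤ (p ∪ p').card := by
          have := Finset.card_union_add_card_inter p p'
          omega
        have hsub : p ∪ p' ⊆ e₀ ∩ e₁ :=
          Finset.union_subset (Finset.subset_inter hpe hpe₁)
            (Finset.subset_inter hp'e hp'e₂)
        have h3' : 3 ≤ (e₀ ∩ e₁).card := le_trans hcup (Finset.card_le_card hsub)
        have h4 : e₀ ∩ e₁ = e₀ :=
          Finset.eq_of_subset_of_card_le Finset.inter_subset_left (by rw [h3 e₀ heG]; omega)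
        have h5 : e₀ ⊆ e₁ := by rw [← h4]; exact Finset.inter_subset_right
        exact hne₁ (Finset.eq_of_subset_of_card_le h5
          (by rw [h3 e₀ heG, h3 e₁ he₁G])).symm
      refine union_small h3 hfree heG he₁G he₂G hne₁.symm hne₂.symm h12 ?_ ?_
      · have := Finset.card_le_card (Finset.subset_inter hpe hpe₁)
        omega
      · have hsu : p' ⊆ (e₀ ∪ e₁) ∩ e₂ :=
          Finset.subset_inter (hp'e.trans Finset.subset_union_left) hp'e₂
        have := Finset.card_le_card hsu
        omega
  omega
end

section
/- For t ≥ 1, the 3-uniform hypergraph Ĥ_t on vertex set {a, b, x₁, …, x_{2t}} with edges {a x_{2i-1} x_{2i}, b x_{2i-1} x_{2i} : 1 ≤ i ≤ t} contains no 3 edges spanning at most 5 vertices. -/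
/-- The edge set of the 3-uniform hypergraph `Ĥ_t` on vertex set `{a, b, x₁, …, x_{2t}}`
(here `a = Sum.inl 0`, `b = Sum.inl 1`, `xᵢ = Sum.inr i`), with edges
`a x_{2i-1} x_{2i}` and `b x_{2i-1} x_{2i}` for `1 ≤ i ≤ t`. -/
def HhatEdges (t : ℕ) : Finset (Finset (Fin 2 ⊕ Fin (2 * t))) :=
  Finset.univ.image (fun i : Fin t =>
      ({Sum.inl 0, Sum.inr ⟨2 * i.1, by have := i.isLt; omega⟩,
        Sum.inr ⟨2 * i.1 + 1, by have := i.isLt; omega⟩} : Finset (Fin 2 ⊕ Fin (2 * t))))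
    ∪ Finset.univ.image (fun i : Fin t =>
      ({Sum.inl 1, Sum.inr ⟨2 * i.1, by have := i.isLt; omega⟩,
        Sum.inr ⟨2 * i.1 + 1, by have := i.isLt; omega⟩} : Finset (Fin 2 ⊕ Fin (2 * t))))

/-- If a finset contains six pairwise-distinct elements, its cardinality exceeds 5. -/
lemma six_le {α : Type*} [DecidableEq α] {S : Finset α} (a b c d e f : α)
    (ha : a ∈ S) (hb : b ∈ S) (hc : c ∈ S) (hd : d ∈ S) (he : e ∈ S) (hf : f ∈ S)
    (hab : a ≠ b) (hac : a ≠ c) (had : a ≠ d) (hae : a ≠ e) (haf : a ≠ f)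
    (hbc : b ≠ c) (hbd : b ≠ d) (hbe : b ≠ e) (hbf : b ≠ f)
    (hcd : c ≠ d) (hce : c ≠ e) (hcf : c ≠ f)
    (hde : d ≠ e) (hdf : d ≠ f) (hef : e ≠ f) : 5 < S.card := by
  have hsub : ({a, b, c, d, e, f} : Finset α) ⊆ S := by
    intro x hx
    simp only [Finset.mem_insert, Finset.mem_singleton] at hx
    rcases hx with rfl | rfl | rfl | rfl | rfl | rfl <;> assumption
  have hle := Finset.card_le_card hsub
  rw [Finset.card_insert_of_notMem (by simp [hab, hac, had, hae, haf]),
      Finset.card_insert_of_notMem (by simp [hbc, hbd, hbe, hbf]),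
      Finset.card_insert_of_notMem (by simp [hcd, hce, hcf]),
      Finset.card_insert_of_notMem (by simp [hde, hdf]),
      Finset.card_insert_of_notMem (by simp [hef]),
      Finset.card_singleton] at hle
  omega

/-- Case where both apices `a`, `b` and two distinct pairs occur. -/
lemma main_mixed {t : ℕ} {S : Finset (Fin 2 ⊕ Fin (2 * t))} (i j : Fin t) (hij : i.1 ≠ j.1)
    (h0 : Sum.inl 0 ∈ S) (h1 : Sum.inl 1 ∈ S)
    (ha : Sum.inr ⟨2 * i.1, by have := i.isLt; omega⟩ ∈ S)
    (hb : Sum.inr ⟨2 * i.1 + 1, by have := i.isLt; omega⟩ ∈ S)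
    (hc : Sum.inr ⟨2 * j.1, by have := j.isLt; omega⟩ ∈ S)
    (hd : Sum.inr ⟨2 * j.1 + 1, by have := j.isLt; omega⟩ ∈ S) : 5 < S.card := by
  apply six_le _ _ _ _ _ _ h0 h1 ha hb hc hd <;> simp [Fin.ext_iff] <;> omega

/-- Case where three distinct pairs occur. -/
lemma main_same {t : ℕ} {S : Finset (Fin 2 ⊕ Fin (2 * t))} (i j k : Fin t)
    (hij : i.1 ≠ j.1) (hik : i.1 ≠ k.1) (hjk : j.1 ≠ k.1)
    (ha : Sum.inr ⟨2 * i.1, by have := i.isLt; omega⟩ ∈ S)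
    (hb : Sum.inr ⟨2 * i.1 + 1, by have := i.isLt; omega⟩ ∈ S)
    (hc : Sum.inr ⟨2 * j.1, by have := j.isLt; omega⟩ ∈ S)
    (hd : Sum.inr ⟨2 * j.1 + 1, by have := j.isLt; omega⟩ ∈ S)
    (he : Sum.inr ⟨2 * k.1, by have := k.isLt; omega⟩ ∈ S)
    (hf : Sum.inr ⟨2 * k.1 + 1, by have := k.isLt; omega⟩ ∈ S) : 5 < S.card := by
  apply six_le _ _ _ _ _ _ ha hb hc hd he hf <;> simp [Fin.ext_iff] <;> omega

set_option maxHeartbeats 2000000 in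
/-- `Ĥ_t` contains no 3 (distinct) edges spanning at most 5 vertices. -/
theorem stmt_6 (t : ℕ) (ht : 1 ≤ t) :
    ∀ e₁ ∈ HhatEdges t, ∀ e₂ ∈ HhatEdges t, ∀ e₃ ∈ HhatEdges t,
      e₁ ≠ e₂ → e₁ ≠ e₃ → e₂ ≠ e₃ → 5 < (e₁ ∪ e₂ ∪ e₃).card := by
  intro e₁ he₁ e₂ he₂ e₃ he₃ h12 h13 h23
  simp only [HhatEdges, Finset.mem_union, Finset.mem_image, Finset.mem_univ, true_and]
    at he₁ he₂ he₃
  obtain (⟨i₁, rfl⟩ | ⟨i₁, rfl⟩) := he₁ <;>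
  obtain (⟨i₂, rfl⟩ | ⟨i₂, rfl⟩) := he₂ <;>
  obtain (⟨i₃, rfl⟩ | ⟨i₃, rfl⟩) := he₃
  · exact main_same i₁ i₂ i₃
      (fun h => h12 (by rw [Fin.val_injective h]))
      (fun h => h13 (by rw [Fin.val_injective h]))
      (fun h => h23 (by rw [Fin.val_injective h]))
      (by simp) (by simp) (by simp) (by simp) (by simp) (by simp)
  · exact main_mixed i₁ i₂ (fun h => h12 (by rw [Fin.val_injective h]))
      (by simp) (by simp) (by simp) (by simp) (by simp) (by simp)
  · exact main_mixed i₁ i₃ (fun h => h13 (by rw [Fin.val_injective h]))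
      (by simp) (by simp) (by simp) (by simp) (by simp) (by simp)
  · exact main_mixed i₂ i₃ (fun h => h23 (by rw [Fin.val_injective h]))
      (by simp) (by simp) (by simp) (by simp) (by simp) (by simp)
  · exact main_mixed i₂ i₃ (fun h => h23 (by rw [Fin.val_injective h]))
      (by simp) (by simp) (by simp) (by simp) (by simp) (by simp)
  · exact main_mixed i₁ i₃ (fun h => h13 (by rw [Fin.val_injective h]))
      (by simp) (by simp) (by simp) (by simp) (by simp) (by simp)
  · exact main_mixed i₁ i₂ (fun h => h12 (by rw [Fin.val_injective h]))
      (by simp) (by simp) (by simp) (by simp) (by simp) (by simp)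
  · exact main_same i₁ i₂ i₃
      (fun h => h12 (by rw [Fin.val_injective h]))
      (fun h => h13 (by rw [Fin.val_injective h]))
      (fun h => h23 (by rw [Fin.val_injective h]))
      (by simp) (by simp) (by simp) (by simp) (by simp) (by simp)
end

section
/- The limit as n → ∞ of n⁻²·f⁽³⁾(n; 5, 3) exists and equals 1/5, where f⁽³⁾(n; 5, 3) is the maximum number of edges in a 3-uniform hypergraph on n vertices with no 3 edges spanning at most 5 vertices. -/
open Finset

set_option maxHeartbeats 1600000

namespace F53


lemma pair_eq_pair_iff {α : Type*} [DecidableEq α] {x y z w : α} :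
    ({x, y} : Finset α) = {z, w} ↔ (x = z ∧ y = w) ∨ (x = w ∧ y = z) := by
  rw [← Finset.coe_inj]
  simp only [Finset.coe_insert, Finset.coe_singleton]
  exact Set.pair_eq_pair_iff

/-- The defining predicate of `f53`. -/
def Good {V : Type*} [DecidableEq V] (G : Finset (Finset V)) : Prop :=
  (∀ e ∈ G, e.card = 3) ∧
  (∀ e₁ ∈ G, ∀ e₂ ∈ G, ∀ e₃ ∈ G,
    e₁ ≠ e₂ → e₁ ≠ e₃ → e₂ ≠ e₃ → 5 < (e₁ ∪ e₂ ∪ e₃).card)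

lemma good_map {V W : Type*} [DecidableEq V] [DecidableEq W] (f : V → W)
    (hf : Function.Injective f) {G : Finset (Finset V)} (hG : Good G) :
    Good (G.image (fun e => e.image f)) ∧ (G.image (fun e => e.image f)).card = G.card := by
  have himg : Function.Injective (fun e : Finset V => e.image f) :=
    Finset.image_injective hf
  constructor
  · constructor
    · intro e he
      obtain ⟨e', he', rfl⟩ := Finset.mem_image.1 he
      rw [Finset.card_image_of_injective _ hf]
      exact hG.1 e' he'
    · intro e₁ he₁ e₂ he₂ e₃ he₃ h12 h13 h23
      obtain ⟨f₁, hf₁, rfl⟩ := Finset.mem_image.1 he₁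
      obtain ⟨f₂, hf₂, rfl⟩ := Finset.mem_image.1 he₂
      obtain ⟨f₃, hf₃, rfl⟩ := Finset.mem_image.1 he₃
      have h12' : f₁ ≠ f₂ := fun h => h12 (by rw [h])
      have h13' : f₁ ≠ f₃ := fun h => h13 (by rw [h])
      have h23' : f₂ ≠ f₃ := fun h => h23 (by rw [h])
      have : (f₁.image f ∪ f₂.image f ∪ f₃.image f) = (f₁ ∪ f₂ ∪ f₃).image f := by
        rw [Finset.image_union, Finset.image_union]
      rw [this, Finset.card_image_of_injective _ hf]
      exact hG.2 f₁ hf₁ f₂ hf₂ f₃ hf₃ h12' h13' h23'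
  · exact Finset.card_image_of_injective _ himg

lemma f53_set_def (n : ℕ) : {m | ∃ G : Finset (Finset (Fin n)),
    (∀ e ∈ G, e.card = 3) ∧
    (∀ e₁ ∈ G, ∀ e₂ ∈ G, ∀ e₃ ∈ G,
      e₁ ≠ e₂ → e₁ ≠ e₃ → e₂ ≠ e₃ → 5 < (e₁ ∪ e₂ ∪ e₃).card) ∧
    G.card = m} = {m | ∃ G : Finset (Finset (Fin n)), Good G ∧ G.card = m} := by
  ext m
  constructor
  · rintro ⟨G, h1, h2, h3⟩; exact ⟨G, ⟨h1, h2⟩, h3⟩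
  · rintro ⟨G, ⟨h1, h2⟩, h3⟩; exact ⟨G, h1, h2, h3⟩

lemma f53_set_nonempty (n : ℕ) :
    Set.Nonempty {m | ∃ G : Finset (Finset (Fin n)), Good G ∧ G.card = m} :=
  ⟨0, ∅, ⟨by simp, by simp⟩, by simp⟩

lemma f53_set_bddAbove (n : ℕ) :
    BddAbove {m | ∃ G : Finset (Finset (Fin n)), Good G ∧ G.card = m} := by
  refine ⟨((univ : Finset (Fin n)).powersetCard 3).card, ?_⟩
  rintro m ⟨G, hG, rfl⟩
  apply Finset.card_le_card
  intro e he
  exact Finset.mem_powersetCard.2 ⟨Finset.subset_univ _, hG.1 e he⟩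




lemma sum_card_filter_comm {α β : Type*} [DecidableEq α] [DecidableEq β]
    (s : Finset α) (t : Finset β) (R : α → β → Prop) [∀ a b, Decidable (R a b)] :
    ∑ x ∈ s, (t.filter (fun y => R x y)).card = ∑ y ∈ t, (s.filter (fun x => R x y)).card := by
  simp only [Finset.card_filter]
  exact Finset.sum_comm

section UB
variable {V : Type*} [DecidableEq V] [Fintype V]

theorem upper_bound (G : Finset (Finset V)) (hG : Good G) :
    5 * G.card ≤ Fintype.card V * (Fintype.card V - 1) := by
  classical
  set deg : Finset V → ℕ := fun p => (G.filter (fun e => p ⊆ e)).card with hdeg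
  set P : Finset (Finset V) := G.biUnion (fun e => e.powersetCard 2) with hP
  have hPcard : ∀ p ∈ P, p.card = 2 := by
    intro p hp
    obtain ⟨e, _, hpe⟩ := Finset.mem_biUnion.1 hp
    exact (Finset.mem_powersetCard.1 hpe).2
  -- (A) codegree ≤ 2
  have hA : ∀ p ∈ P, deg p ≤ 2 := by
    intro p hp
    by_contra h
    push_neg at h
    obtain ⟨t, ht, htcard⟩ := Finset.exists_subset_card_eq (n := 3) h
    obtain ⟨e₁, e₂, e₃, h12, h13, h23, rfl⟩ := Finset.card_eq_three.1 htcard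
    have m1 := ht (by simp : e₁ ∈ ({e₁, e₂, e₃} : Finset (Finset V)))
    have m2 := ht (by simp : e₂ ∈ ({e₁, e₂, e₃} : Finset (Finset V)))
    have m3 := ht (by simp : e₃ ∈ ({e₁, e₂, e₃} : Finset (Finset V)))
    rw [Finset.mem_filter] at m1 m2 m3
    have hup : e₁ ∪ e₂ ∪ e₃ ⊆ e₁ ∪ (e₂ \ p) ∪ (e₃ \ p) := by
      intro x hx
      simp only [Finset.mem_union, Finset.mem_sdiff] at hx ⊢
      by_cases hxp : x ∈ p
      · exact Or.inl (Or.inl (m1.2 hxp))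
      · tauto
    have hcard : (e₁ ∪ e₂ ∪ e₃).card ≤ 5 := by
      calc (e₁ ∪ e₂ ∪ e₃).card ≤ (e₁ ∪ (e₂ \ p) ∪ (e₃ \ p)).card := Finset.card_le_card hup
        _ ≤ (e₁ ∪ (e₂ \ p)).card + (e₃ \ p).card := Finset.card_union_le _ _
        _ ≤ e₁.card + (e₂ \ p).card + (e₃ \ p).card := by
            have := Finset.card_union_le e₁ (e₂ \ p); omega
        _ ≤ 5 := by
            have c1 := hG.1 e₁ m1.1
            have c2 : (e₂ \ p).card = 1 := by
              rw [Finset.card_sdiff_of_subset m2.2, hG.1 e₂ m2.1, hPcard p hp]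
            have c3 : (e₃ \ p).card = 1 := by
              rw [Finset.card_sdiff_of_subset m3.2, hG.1 e₃ m3.1, hPcard p hp]
            omega
    have := hG.2 e₁ m1.1 e₂ m2.1 e₃ m3.1 h12 h13 h23
    omega
  -- (B) each edge contains at most one codeg-≥2 pair
  have hB : ∀ e ∈ G, ((e.powersetCard 2).filter (fun p => 2 ≤ deg p)).card ≤ 1 := by
    intro e he
    by_contra h
    push_neg at h
    obtain ⟨p, hp, p', hp', hpp'⟩ := Finset.one_lt_card.1 h
    rw [Finset.mem_filter, Finset.mem_powersetCard] at hp hp'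
    obtain ⟨⟨hpe, hp2⟩, hpd⟩ := hp
    obtain ⟨⟨hp'e, hp'2⟩, hp'd⟩ := hp'
    -- get partner edges
    have hef : ∃ f ∈ G, p ⊆ f ∧ f ≠ e := by
      obtain ⟨f, hf, hfe⟩ := Finset.exists_mem_ne
        (s := G.filter (fun e => p ⊆ e)) (by have := hpd; simp only [hdeg] at this; omega) e
      rw [Finset.mem_filter] at hf
      exact ⟨f, hf.1, hf.2, hfe⟩
    have hef' : ∃ f ∈ G, p' ⊆ f ∧ f ≠ e := by
      obtain ⟨f, hf, hfe⟩ := Finset.exists_mem_ne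
        (s := G.filter (fun e => p' ⊆ e)) (by have := hp'd; simp only [hdeg] at this; omega) e
      rw [Finset.mem_filter] at hf
      exact ⟨f, hf.1, hf.2, hfe⟩
    obtain ⟨f, hfG, hpf, hfe⟩ := hef
    obtain ⟨f', hf'G, hp'f', hf'e⟩ := hef'
    have he3 := hG.1 e he
    have hff' : f ≠ f' := by
      rintro rfl
      have hun : p ∪ p' ⊆ e := Finset.union_subset hpe hp'e
      have hcard3 : (p ∪ p').card = 3 := by
        have hle : (p ∪ p').card ≤ 3 := le_trans (Finset.card_le_card hun) (le_of_eq he3)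
        have hge : 2 < (p ∪ p').card := by
          by_contra hle2
          push_neg at hle2
          have h1 : p = p ∪ p' := Finset.eq_of_subset_of_card_le Finset.subset_union_left
            (by omega)
          have h2 : p' ⊆ p := h1 ▸ Finset.subset_union_right
          exact hpp' (Finset.eq_of_subset_of_card_le h2 (by omega)).symm
        omega
      have : p ∪ p' = e := Finset.eq_of_subset_of_card_le hun (by omega)
      have : e ⊆ f := this ▸ Finset.union_subset hpf hp'f'
      exact hfe (Finset.eq_of_subset_of_card_le this (by rw [hG.1 f hfG, he3])).symm
    have hup : e ∪ f ∪ f' ⊆ e ∪ (f \ p) ∪ (f' \ p') := by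
      intro x hx
      simp only [Finset.mem_union, Finset.mem_sdiff] at hx ⊢
      by_cases hxp : x ∈ p
      · exact Or.inl (Or.inl (hpe hxp))
      · by_cases hxp' : x ∈ p'
        · exact Or.inl (Or.inl (hp'e hxp'))
        · tauto
    have hcard : (e ∪ f ∪ f').card ≤ 5 := by
      calc (e ∪ f ∪ f').card ≤ (e ∪ (f \ p) ∪ (f' \ p')).card := Finset.card_le_card hup
        _ ≤ (e ∪ (f \ p)).card + (f' \ p').card := Finset.card_union_le _ _
        _ ≤ e.card + (f \ p).card + (f' \ p').card := by
            have := Finset.card_union_le e (f \ p); omega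
        _ ≤ 5 := by
            have c2 : (f \ p).card = 1 := by
              rw [Finset.card_sdiff_of_subset hpf, hG.1 f hfG, hp2]
            have c3 : (f' \ p').card = 1 := by
              rw [Finset.card_sdiff_of_subset hp'f', hG.1 f' hf'G, hp'2]
            omega
    have := hG.2 e he f hfG f' hf'G (fun h => hfe h.symm) (fun h => hf'e h.symm) hff'
    omega
  -- double counting
  set P₂ : Finset (Finset V) := P.filter (fun p => 2 ≤ deg p) with hP₂
  have hswap : ∑ p ∈ P, deg p = ∑ e ∈ G, (P.filter (fun p => p ⊆ e)).card := by
    simpa [hdeg] using sum_card_filter_comm P G (fun p e => p ⊆ e)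
  have hfib : ∀ e ∈ G, P.filter (fun p => p ⊆ e) = e.powersetCard 2 := by
    intro e he
    ext p
    simp only [Finset.mem_filter, Finset.mem_powersetCard]
    constructor
    · rintro ⟨hp, hpe⟩; exact ⟨hpe, hPcard p hp⟩
    · rintro ⟨hpe, hp2⟩
      exact ⟨Finset.mem_biUnion.2 ⟨e, he, Finset.mem_powersetCard.2 ⟨hpe, hp2⟩⟩, hpe⟩
  have h3G : ∑ p ∈ P, deg p = 3 * G.card := by
    rw [hswap, Finset.sum_congr rfl (fun e he => by
      rw [hfib e he, Finset.card_powersetCard, hG.1 e he])]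
    simp [mul_comm]
  have hP2G : 2 * P₂.card ≤ G.card := by
    have hswap2 : ∑ p ∈ P₂, deg p = ∑ e ∈ G, (P₂.filter (fun p => p ⊆ e)).card := by
      simpa [hdeg] using sum_card_filter_comm P₂ G (fun p e => p ⊆ e)
    have hlow : 2 * P₂.card ≤ ∑ p ∈ P₂, deg p := by
      rw [two_mul]
      calc P₂.card + P₂.card = ∑ _p ∈ P₂, 1 + ∑ _p ∈ P₂, 1 := by simp
        _ ≤ ∑ p ∈ P₂, deg p := by
            rw [← Finset.sum_add_distrib]
            apply Finset.sum_le_sum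
            intro p hp
            have := (Finset.mem_filter.1 hp).2
            omega
    have hhigh : ∑ e ∈ G, (P₂.filter (fun p => p ⊆ e)).card ≤ G.card := by
      calc ∑ e ∈ G, (P₂.filter (fun p => p ⊆ e)).card ≤ ∑ _e ∈ G, 1 := by
            apply Finset.sum_le_sum
            intro e he
            refine le_trans (Finset.card_le_card ?_) (hB e he)
            intro p hp
            rw [Finset.mem_filter] at hp ⊢
            have hp2 := Finset.mem_filter.1 hp.1
            exact ⟨Finset.mem_powersetCard.2 ⟨hp.2, hPcard p hp2.1⟩, hp2.2⟩
        _ = G.card := by simp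
    omega
  have hdegsum : ∑ p ∈ P, deg p ≤ P.card + P₂.card := by
    have hstep : ∀ p ∈ P, deg p ≤ 1 + (if 2 ≤ deg p then 1 else 0) := by
      intro p hp
      by_cases h : 2 ≤ deg p
      · have := hA p hp; simp [h]; omega
      · simp [h]; omega
    calc ∑ p ∈ P, deg p ≤ ∑ p ∈ P, (1 + (if 2 ≤ deg p then 1 else 0)) :=
          Finset.sum_le_sum hstep
      _ = P.card + P₂.card := by
          rw [Finset.sum_add_distrib]
          congr 1
          · simp
          · rw [hP₂, Finset.card_filter]
  have hPbound : P.card ≤ (Fintype.card V).choose 2 := by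
    have hsub : P ⊆ (univ : Finset V).powersetCard 2 := by
      intro p hp
      exact Finset.mem_powersetCard.2 ⟨Finset.subset_univ _, hPcard p hp⟩
    calc P.card ≤ ((univ : Finset V).powersetCard 2).card := Finset.card_le_card hsub
      _ = (Fintype.card V).choose 2 := by
          rw [Finset.card_powersetCard, Finset.card_univ]
  have key : 2 * ((Fintype.card V).choose 2) = Fintype.card V * (Fintype.card V - 1) := by
    rw [Nat.choose_two_right]
    have h2 : 2 ∣ Fintype.card V * (Fintype.card V - 1) := by
      rcases Nat.even_or_odd (Fintype.card V) with h | h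
      · exact Dvd.dvd.mul_right h.two_dvd _
      · rcases Nat.eq_zero_or_pos (Fintype.card V) with h0 | h0
        · simp [h0]
        · have : Even (Fintype.card V - 1) := Nat.Odd.sub_odd h odd_one
          exact Dvd.dvd.mul_left this.two_dvd _
    exact Nat.mul_div_cancel' h2
  omega

end UB



instance instNZ (a : ℕ) : NeZero (40*a+10) := ⟨by omega⟩

/-! Construction data -/

def sv (a j i : ℕ) : ℕ :=
  if j = 0 then 2*a+i else if j = 1 then 4*a+i else if j = 2 then 6*a+i else 8*a+1+i

def tv (a j i : ℕ) : ℕ :=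
  if j = 0 then 4*a+1-i else if j = 1 then 6*a+1-i+(20*a+5)
  else if j = 2 then 8*a+2-i else 10*a+3-i+(20*a+5)

def aoff (a ε : ℕ) : ℕ := if ε = 0 then 0 else 20*a+5

def clsF (a j r i : ℕ) : ℕ :=
  if j = 0 then
    (if r = 0 then 2*a+1-2*i else if r = 1 then 2*a+i else if r = 2 then 4*a+1-i
     else if r = 3 then 18*a+5-i else 16*a+4+i)
  else if j = 1 then
    (if r = 0 then 18*a+4+2*i else if r = 1 then 4*a+i else if r = 2 then 14*a+4+i
     else if r = 3 then 16*a+5-i else 6*a+1-i)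
  else if j = 2 then
    (if r = 0 then 2*a+2-2*i else if r = 1 then 6*a+i else if r = 2 then 8*a+2-i
     else if r = 3 then 14*a+5-i else 12*a+3+i)
  else
    (if r = 0 then 18*a+3+2*i else if r = 1 then 8*a+1+i else if r = 2 then 10*a+2+i
     else if r = 3 then 12*a+4-i else 10*a+3-i)

def offF (a j r i : ℕ) : ℕ :=
  if j = 0 ∨ j = 2 then
    (if r = 0 then sv a j i else if r = 1 then 0 else if r = 2 then 0
     else if r = 3 then sv a j i else tv a j i)
  else
    (if r = 0 then tv a j i else if r = 1 then 0 else if r = 2 then tv a j i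
     else if r = 3 then sv a j i else 20*a+5)

def pr (a : ℕ) (x : ZMod (40*a+10)) (j r i : ℕ) : Finset (ZMod (40*a+10)) :=
  {x + (offF a j r i : ZMod (40*a+10)),
   x + (offF a j r i : ZMod (40*a+10)) + (clsF a j r i : ZMod (40*a+10))}

def tri (a : ℕ) (x : ZMod (40*a+10)) (j i ε : ℕ) : Finset (ZMod (40*a+10)) :=
  {x + (sv a j i : ZMod (40*a+10)), x + (tv a j i : ZMod (40*a+10)),
   x + (aoff a ε : ZMod (40*a+10))}

/-! Arithmetic helpers -/

lemma cast_injN {a u v : ℕ} (hu : u < 40*a+10) (hv : v < 40*a+10) :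
    ((u : ZMod (40*a+10)) = (v : ZMod (40*a+10))) ↔ u = v := by
  constructor
  · intro h
    have := congrArg ZMod.val h
    rwa [ZMod.val_cast_of_lt hu, ZMod.val_cast_of_lt hv] at this
  · rintro rfl; rfl

lemma addcast1 {a : ℕ} (x : ZMod (40*a+10)) {u v w : ℕ} (h : u + v = w) :
    x + (u : ZMod (40*a+10)) + (v : ZMod (40*a+10)) = x + (w : ZMod (40*a+10)) := by
  subst h; push_cast; ring

lemma addcast2 {a : ℕ} (x : ZMod (40*a+10)) {u v w : ℕ} (h : u + v = w + (40*a+10)) :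
    x + (u : ZMod (40*a+10)) + (v : ZMod (40*a+10)) = x + (w : ZMod (40*a+10)) := by
  have : ((u + v : ℕ) : ZMod (40*a+10)) = ((w : ℕ) : ZMod (40*a+10)) := by
    rw [h, Nat.cast_add, ZMod.natCast_self, add_zero]
  calc x + (u : ZMod (40*a+10)) + (v : ZMod (40*a+10))
      = x + ((u + v : ℕ) : ZMod (40*a+10)) := by push_cast; ring
    _ = x + (w : ZMod (40*a+10)) := by rw [this]

lemma pairsplit {a : ℕ} {y y' : ZMod (40*a+10)} {c c' : ℕ}
    (hc : 0 < c) (hc' : 0 < c') (hcN : c < 40*a+10) (hc'N : c' < 40*a+10)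
    (hsum : c + c' ≠ 40*a+10)
    (h : ({y, y + (c : ZMod (40*a+10))} : Finset (ZMod (40*a+10)))
        = {y', y' + (c' : ZMod (40*a+10))}) : y = y' ∧ c = c' := by
  rw [pair_eq_pair_iff] at h
  rcases h with ⟨h1, h2⟩ | ⟨h1, h2⟩
  · subst h1
    refine ⟨rfl, ?_⟩
    have h3 : (c : ZMod (40*a+10)) = (c' : ZMod (40*a+10)) := by
      have := h2; rwa [add_right_inj] at this
    exact (cast_injN hcN hc'N).1 h3
  · exfalso
    rw [← h2] at h1
    have h3 : y + ((c : ZMod (40*a+10)) + (c' : ZMod (40*a+10))) = y + 0 := by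
      rw [add_zero, ← add_assoc, ← h1]
    have h4 : ((c + c' : ℕ) : ZMod (40*a+10)) = 0 := by
      push_cast
      exact add_left_cancel h3
    rw [ZMod.natCast_eq_zero_iff] at h4
    obtain ⟨k, hk⟩ := h4
    rcases k with _ | _ | k
    · omega
    · omega
    · have h5 : (40*a+10)*2 ≤ (40*a+10)*(k+1+1) := Nat.mul_le_mul_left _ (by omega)
      omega

lemma cls_bounds {a j r i : ℕ} (hj : j ≤ 3) (hr : r ≤ 4) (hi1 : 1 ≤ i) (hia : i ≤ a) :
    1 ≤ clsF a j r i ∧ clsF a j r i ≤ 20*a+4 := by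
  unfold clsF; split_ifs <;> omega

set_option maxHeartbeats 3200000 in
lemma cls_inj {a j r i j' r' i' : ℕ} (hj : j ≤ 3) (hr : r ≤ 4) (hi1 : 1 ≤ i) (hia : i ≤ a)
    (hj' : j' ≤ 3) (hr' : r' ≤ 4) (hi1' : 1 ≤ i') (hia' : i' ≤ a)
    (h : clsF a j r i = clsF a j' r' i') : j = j' ∧ r = r' ∧ i = i' := by
  interval_cases j <;> interval_cases j' <;>
    simp only [clsF, if_true, if_false] at h <;>
    norm_num at h <;> split_ifs at h <;> omega

lemma pr_inj {a : ℕ} {x x' : ZMod (40*a+10)} {j r i j' r' i' : ℕ}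
    (hj : j ≤ 3) (hr : r ≤ 4) (hi1 : 1 ≤ i) (hia : i ≤ a)
    (hj' : j' ≤ 3) (hr' : r' ≤ 4) (hi1' : 1 ≤ i') (hia' : i' ≤ a)
    (h : pr a x j r i = pr a x' j' r' i') :
    x = x' ∧ j = j' ∧ r = r' ∧ i = i' := by
  have hb := cls_bounds (a := a) hj hr hi1 hia
  have hb' := cls_bounds (a := a) hj' hr' hi1' hia'
  have hps := pairsplit (by omega) (by omega) (by omega) (by omega) (by omega) h
  obtain ⟨heq, hcls⟩ := hps
  obtain ⟨rfl, rfl, rfl⟩ := cls_inj hj hr hi1 hia hj' hr' hi1' hia' hcls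
  refine ⟨?_, rfl, rfl, rfl⟩
  exact add_right_cancel heq

lemma miss_not_pr {a : ℕ} {x x' : ZMod (40*a+10)} {j r i : ℕ}
    (hj : j ≤ 3) (hr : r ≤ 4) (hi1 : 1 ≤ i) (hia : i ≤ a) :
    ({x', x' + ((20*a+5 : ℕ) : ZMod (40*a+10))} : Finset (ZMod (40*a+10)))
      ≠ pr a x j r i := by
  intro h
  have hb := cls_bounds (a := a) hj hr hi1 hia
  have := pairsplit (c := 20*a+5) (c' := clsF a j r i)
    (by omega) (by omega) (by omega) (by omega) (by omega) h
  omega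

/-! value bounds -/

lemma sv_facts {a j i : ℕ} (hj : j ≤ 3) (hi1 : 1 ≤ i) (hia : i ≤ a) :
    0 < sv a j i ∧ sv a j i < 40*a+10 ∧ sv a j i ≠ 20*a+5 := by
  unfold sv; split_ifs <;> first | omega | simp_all

lemma tv_facts {a j i : ℕ} (hj : j ≤ 3) (hi1 : 1 ≤ i) (hia : i ≤ a) :
    0 < tv a j i ∧ tv a j i < 40*a+10 ∧ tv a j i ≠ 20*a+5 := by
  unfold tv; split_ifs <;> first | omega | simp_all

lemma svtv_ne {a j i : ℕ} (hj : j ≤ 3) (hi1 : 1 ≤ i) (hia : i ≤ a) :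
    sv a j i ≠ tv a j i := by
  unfold sv tv; split_ifs <;> first | omega | simp_all

lemma aoff_facts {a ε : ℕ} : aoff a ε = 0 ∨ aoff a ε = 20*a+5 := by
  unfold aoff; split_ifs
  · exact Or.inl rfl
  · exact Or.inr rfl

lemma addne {a : ℕ} (x : ZMod (40*a+10)) {u v : ℕ}
    (hu : u < 40*a+10) (hv : v < 40*a+10) (huv : u ≠ v) :
    x + (u : ZMod (40*a+10)) ≠ x + (v : ZMod (40*a+10)) := fun h =>
  huv ((cast_injN hu hv).1 (add_left_cancel h))

/-! identities: `pr` vs actual covered pairs -/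

lemma idA0 {a : ℕ} (x : ZMod (40*a+10)) {j i : ℕ} (hj : j ≤ 3) (hi1 : 1 ≤ i) (hia : i ≤ a) :
    ({x + (sv a j i : ZMod (40*a+10)), x} : Finset (ZMod (40*a+10))) = pr a x j 1 i := by
  have hoff : offF a j 1 i = 0 := by unfold offF; split_ifs <;> first | omega | simp_all
  have hcls : clsF a j 1 i = sv a j i := by unfold clsF sv; split_ifs <;> first | omega | simp_all
  rw [pr, hoff, hcls, Nat.cast_zero, add_zero, pair_comm]

lemma idAm {a : ℕ} (x : ZMod (40*a+10)) {j i : ℕ} (hj : j ≤ 3) (hi1 : 1 ≤ i) (hia : i ≤ a) :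
    ({x + (sv a j i : ZMod (40*a+10)), x + ((20*a+5 : ℕ) : ZMod (40*a+10))} :
      Finset (ZMod (40*a+10))) = pr a x j 3 i := by
  have hoff : offF a j 3 i = sv a j i := by unfold offF sv; split_ifs <;> first | omega | simp_all
  have h1 : sv a j i + clsF a j 3 i = 20*a+5 := by unfold clsF sv; split_ifs <;> first | omega | simp_all
  rw [pr, hoff, addcast1 x h1]

lemma idAB {a : ℕ} (x : ZMod (40*a+10)) {j i : ℕ} (hj : j ≤ 3) (hi1 : 1 ≤ i) (hia : i ≤ a) :
    ({x + (sv a j i : ZMod (40*a+10)), x + (tv a j i : ZMod (40*a+10))} :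
      Finset (ZMod (40*a+10))) = pr a x j 0 i := by
  interval_cases j
  · have hoff : offF a 0 0 i = sv a 0 i := by unfold offF; split_ifs <;> first | omega | simp_all
    have h1 : sv a 0 i + clsF a 0 0 i = tv a 0 i := by unfold sv tv clsF; split_ifs <;> first | omega | simp_all
    rw [pr, hoff, addcast1 x h1]
  · have hoff : offF a 1 0 i = tv a 1 i := by unfold offF tv; split_ifs <;> first | omega | simp_all
    have h1 : tv a 1 i + clsF a 1 0 i = sv a 1 i + (40*a+10) := by
      unfold sv tv clsF; split_ifs <;> first | omega | simp_all
    rw [pr, hoff, addcast2 x h1, pair_comm]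
  · have hoff : offF a 2 0 i = sv a 2 i := by unfold offF; split_ifs <;> first | omega | simp_all
    have h1 : sv a 2 i + clsF a 2 0 i = tv a 2 i := by unfold sv tv clsF; split_ifs <;> first | omega | simp_all
    rw [pr, hoff, addcast1 x h1]
  · have hoff : offF a 3 0 i = tv a 3 i := by unfold offF tv; split_ifs <;> first | omega | simp_all
    have h1 : tv a 3 i + clsF a 3 0 i = sv a 3 i + (40*a+10) := by
      unfold sv tv clsF; split_ifs <;> first | omega | simp_all
    rw [pr, hoff, addcast2 x h1, pair_comm]

lemma idB0 {a : ℕ} (x : ZMod (40*a+10)) {j i : ℕ} (hj : j ≤ 3) (hi1 : 1 ≤ i) (hia : i ≤ a) :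
    ({x + (tv a j i : ZMod (40*a+10)), x} : Finset (ZMod (40*a+10))) = pr a x j 2 i := by
  interval_cases j
  · have hoff : offF a 0 2 i = 0 := by unfold offF; split_ifs <;> first | omega | simp_all
    have hcls : clsF a 0 2 i = tv a 0 i := by unfold clsF tv; split_ifs <;> first | omega | simp_all
    rw [pr, hoff, hcls, Nat.cast_zero, add_zero, pair_comm]
  · have hoff : offF a 1 2 i = tv a 1 i := by unfold offF tv; split_ifs <;> first | omega | simp_all
    have h1 : tv a 1 i + clsF a 1 2 i = 0 + (40*a+10) := by
      unfold tv clsF; split_ifs <;> first | omega | simp_all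
    rw [pr, hoff, addcast2 x h1, Nat.cast_zero, add_zero]
  · have hoff : offF a 2 2 i = 0 := by unfold offF; split_ifs <;> first | omega | simp_all
    have hcls : clsF a 2 2 i = tv a 2 i := by unfold clsF tv; split_ifs <;> first | omega | simp_all
    rw [pr, hoff, hcls, Nat.cast_zero, add_zero, pair_comm]
  · have hoff : offF a 3 2 i = tv a 3 i := by unfold offF tv; split_ifs <;> first | omega | simp_all
    have h1 : tv a 3 i + clsF a 3 2 i = 0 + (40*a+10) := by
      unfold tv clsF; split_ifs <;> first | omega | simp_all
    rw [pr, hoff, addcast2 x h1, Nat.cast_zero, add_zero]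

lemma idBm {a : ℕ} (x : ZMod (40*a+10)) {j i : ℕ} (hj : j ≤ 3) (hi1 : 1 ≤ i) (hia : i ≤ a) :
    ({x + (tv a j i : ZMod (40*a+10)), x + ((20*a+5 : ℕ) : ZMod (40*a+10))} :
      Finset (ZMod (40*a+10))) = pr a x j 4 i := by
  interval_cases j
  · have hoff : offF a 0 4 i = tv a 0 i := by unfold offF tv; split_ifs <;> first | omega | simp_all
    have h1 : tv a 0 i + clsF a 0 4 i = 20*a+5 := by unfold tv clsF; split_ifs <;> first | omega | simp_all
    rw [pr, hoff, addcast1 x h1]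
  · have hoff : offF a 1 4 i = 20*a+5 := by unfold offF; split_ifs <;> first | omega | simp_all
    have h1 : (20*a+5) + clsF a 1 4 i = tv a 1 i := by unfold tv clsF; split_ifs <;> first | omega | simp_all
    rw [pr, hoff, addcast1 x h1, pair_comm]
  · have hoff : offF a 2 4 i = tv a 2 i := by unfold offF tv; split_ifs <;> first | omega | simp_all
    have h1 : tv a 2 i + clsF a 2 4 i = 20*a+5 := by unfold tv clsF; split_ifs <;> first | omega | simp_all
    rw [pr, hoff, addcast1 x h1]
  · have hoff : offF a 3 4 i = 20*a+5 := by unfold offF; split_ifs <;> first | omega | simp_all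
    have h1 : (20*a+5) + clsF a 3 4 i = tv a 3 i := by unfold tv clsF; split_ifs <;> first | omega | simp_all
    rw [pr, hoff, addcast1 x h1, pair_comm]

/-! generic subset enumeration -/

lemma two_of_three {α : Type*} [DecidableEq α] {A B C : α} {Q : Finset α}
    (hQ : Q ⊆ {A, B, C}) (h2 : Q.card = 2) :
    Q = {A, B} ∨ Q = {A, C} ∨ Q = {B, C} := by
  obtain ⟨p, q, hpq, rfl⟩ := Finset.card_eq_two.1 h2
  have hp := hQ (Finset.mem_insert_self p {q})
  have hq := hQ (Finset.mem_insert_of_mem (Finset.mem_singleton_self q))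
  simp only [Finset.mem_insert, Finset.mem_singleton] at hp hq
  rcases hp with rfl | rfl | rfl <;> rcases hq with rfl | rfl | rfl
  · exact absurd rfl hpq
  · exact Or.inl rfl
  · exact Or.inr (Or.inl rfl)
  · exact Or.inl (Finset.pair_comm _ _)
  · exact absurd rfl hpq
  · exact Or.inr (Or.inr rfl)
  · exact Or.inr (Or.inl (Finset.pair_comm _ _))
  · exact Or.inr (Or.inr (Finset.pair_comm _ _))
  · exact absurd rfl hpq

lemma two_of_four {α : Type*} [DecidableEq α] {A B C D : α} {Q : Finset α}
    (hQ : Q ⊆ {A, B, C, D}) (h2 : Q.card = 2) :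
    Q = {A, B} ∨ Q = {A, C} ∨ Q = {A, D} ∨ Q = {B, C} ∨ Q = {B, D} ∨ Q = {C, D} := by
  obtain ⟨p, q, hpq, rfl⟩ := Finset.card_eq_two.1 h2
  have hp := hQ (Finset.mem_insert_self p {q})
  have hq := hQ (Finset.mem_insert_of_mem (Finset.mem_singleton_self q))
  simp only [Finset.mem_insert, Finset.mem_singleton] at hp hq
  rcases hp with rfl | rfl | rfl | rfl <;> rcases hq with rfl | rfl | rfl | rfl
  · exact absurd rfl hpq
  · exact Or.inl rfl
  · exact Or.inr (Or.inl rfl)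
  · exact Or.inr (Or.inr (Or.inl rfl))
  · exact Or.inl (Finset.pair_comm _ _)
  · exact absurd rfl hpq
  · exact Or.inr (Or.inr (Or.inr (Or.inl rfl)))
  · exact Or.inr (Or.inr (Or.inr (Or.inr (Or.inl rfl))))
  · exact Or.inr (Or.inl (Finset.pair_comm _ _))
  · exact Or.inr (Or.inr (Or.inr (Or.inl (Finset.pair_comm _ _))))
  · exact absurd rfl hpq
  · exact Or.inr (Or.inr (Or.inr (Or.inr (Or.inr rfl))))
  · exact Or.inr (Or.inr (Or.inl (Finset.pair_comm _ _)))
  · exact Or.inr (Or.inr (Or.inr (Or.inr (Or.inl (Finset.pair_comm _ _)))))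
  · exact Or.inr (Or.inr (Or.inr (Or.inr (Or.inr (Finset.pair_comm _ _)))))
  · exact absurd rfl hpq

lemma subpair {a : ℕ} {x : ZMod (40*a+10)} {j i ε : ℕ}
    (hj : j ≤ 3) (hi1 : 1 ≤ i) (hia : i ≤ a) (hε : ε ≤ 1)
    {Q : Finset (ZMod (40*a+10))} (hQ : Q ⊆ tri a x j i ε) (h2 : Q.card = 2) :
    ∃ r ≤ 4, Q = pr a x j r i := by
  rcases two_of_three hQ h2 with h | h | h
  · exact ⟨0, by omega, h.trans (idAB x hj hi1 hia)⟩
  · interval_cases ε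
    · have h0 : (aoff a 0 : ZMod (40*a+10)) = 0 := by norm_num [aoff]
      rw [h0, add_zero] at h
      exact ⟨1, by omega, h.trans (idA0 x hj hi1 hia)⟩
    · have h0 : ((aoff a 1 : ℕ) : ZMod (40*a+10)) = ((20*a+5 : ℕ) : ZMod (40*a+10)) := by
        norm_num [aoff]
      rw [h0] at h
      exact ⟨3, by omega, h.trans (idAm x hj hi1 hia)⟩
  · interval_cases ε
    · have h0 : (aoff a 0 : ZMod (40*a+10)) = 0 := by norm_num [aoff]
      rw [h0, add_zero] at h
      exact ⟨2, by omega, h.trans (idB0 x hj hi1 hia)⟩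
    · have h0 : ((aoff a 1 : ℕ) : ZMod (40*a+10)) = ((20*a+5 : ℕ) : ZMod (40*a+10)) := by
        norm_num [aoff]
      rw [h0] at h
      exact ⟨4, by omega, h.trans (idBm x hj hi1 hia)⟩

lemma addne0 {a : ℕ} (x : ZMod (40*a+10)) {u : ℕ} (hu : u < 40*a+10) (h0 : 0 < u) :
    x + (u : ZMod (40*a+10)) ≠ x := by
  intro h
  have h2 : x + (u : ZMod (40*a+10)) = x + ((0:ℕ) : ZMod (40*a+10)) := by
    rw [Nat.cast_zero, add_zero]; exact h
  exact absurd ((cast_injN hu (by omega)).1 (add_left_cancel h2)) (by omega)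

lemma tri_card {a : ℕ} (x : ZMod (40*a+10)) {j i ε : ℕ}
    (hj : j ≤ 3) (hi1 : 1 ≤ i) (hia : i ≤ a) :
    (tri a x j i ε).card = 3 := by
  have hs1 := sv_facts (a := a) (i := i) hj hi1 hia
  have ht1 := tv_facts (a := a) (i := i) hj hi1 hia
  have hst := svtv_ne (a := a) (i := i) hj hi1 hia
  have hao := aoff_facts (a := a) (ε := ε)
  have h1 : x + (sv a j i : ZMod (40*a+10)) ≠ x + (tv a j i : ZMod (40*a+10)) :=
    addne x (by omega) (by omega) hst
  have h2 : x + (sv a j i : ZMod (40*a+10)) ≠ x + (aoff a ε : ZMod (40*a+10)) :=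
    addne x (by omega) (by omega) (by omega)
  have h3 : x + (tv a j i : ZMod (40*a+10)) ≠ x + (aoff a ε : ZMod (40*a+10)) :=
    addne x (by omega) (by omega) (by omega)
  have hm1 : x + (sv a j i : ZMod (40*a+10)) ∉
      ({x + (tv a j i : ZMod (40*a+10)), x + (aoff a ε : ZMod (40*a+10))} :
        Finset (ZMod (40*a+10))) := by
    simp only [mem_insert, mem_singleton]
    push_neg
    exact ⟨h1, h2⟩
  have hm2 : x + (tv a j i : ZMod (40*a+10)) ∉
      ({x + (aoff a ε : ZMod (40*a+10))} : Finset (ZMod (40*a+10))) := by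
    simp only [mem_singleton]
    exact h3
  rw [tri, card_insert_of_notMem hm1, card_insert_of_notMem hm2, card_singleton]

lemma tri_inj {a : ℕ} {x x' : ZMod (40*a+10)} {j i ε j' i' ε' : ℕ}
    (hj : j ≤ 3) (hi1 : 1 ≤ i) (hia : i ≤ a) (hε : ε ≤ 1)
    (hj' : j' ≤ 3) (hi1' : 1 ≤ i') (hia' : i' ≤ a) (hε' : ε' ≤ 1)
    (h : tri a x j i ε = tri a x' j' i' ε') :
    x = x' ∧ j = j' ∧ i = i' ∧ ε = ε' := by
  have hs1 := sv_facts (a := a) (i := i) hj hi1 hia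
  have ht1 := tv_facts (a := a) (i := i) hj hi1 hia
  have hst := svtv_ne (a := a) (i := i) hj hi1 hia
  have hQsub : ({x + (sv a j i : ZMod (40*a+10)), x + (tv a j i : ZMod (40*a+10))} :
      Finset (ZMod (40*a+10))) ⊆ tri a x' j' i' ε' := by
    rw [← h, tri]
    intro y hy
    simp only [mem_insert, mem_singleton] at hy ⊢
    tauto
  have hQ2 : ({x + (sv a j i : ZMod (40*a+10)), x + (tv a j i : ZMod (40*a+10))} :
      Finset (ZMod (40*a+10))).card = 2 := by
    rw [card_insert_of_notMem (by
      simp only [mem_singleton]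
      exact addne x (by omega) (by omega) hst), card_singleton]
  obtain ⟨r, hr4, hQ⟩ := subpair hj' hi1' hia' hε' hQsub hQ2
  rw [idAB x hj hi1 hia] at hQ
  obtain ⟨hx, hjj, hr, hii⟩ := pr_inj hj (by omega) hi1 hia hj' hr4 hi1' hia' hQ
  subst hx; subst hjj; subst hii
  refine ⟨rfl, rfl, rfl, ?_⟩
  have hmem : x + ((aoff a ε' : ℕ) : ZMod (40*a+10)) ∈ tri a x j i ε := by
    rw [h, tri]
    simp
  rw [tri] at hmem
  simp only [mem_insert, mem_singleton] at hmem
  have haoε := aoff_facts (a := a) (ε := ε)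
  have haoε' := aoff_facts (a := a) (ε := ε')
  rcases hmem with hm | hm | hm
  · exfalso
    have := (cast_injN (a := a) (by omega) (by omega)).1 (add_left_cancel hm)
    omega
  · exfalso
    have := (cast_injN (a := a) (by omega) (by omega)).1 (add_left_cancel hm)
    omega
  · have heq := (cast_injN (a := a) (by omega) (by omega)).1 (add_left_cancel hm)
    unfold aoff at heq
    split_ifs at heq <;> omega

/-! the hypergraph -/

def Gc (a : ℕ) : Finset (Finset (ZMod (40*a+10))) :=
  ((univ : Finset (ZMod (40*a+10))) ×ˢ ((range 4) ×ˢ ((Icc 1 a) ×ˢ (range 2)))).image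
    (fun q => tri a q.1 q.2.1 q.2.2.1 q.2.2.2)

lemma mem_Gc {a : ℕ} {e : Finset (ZMod (40*a+10))} :
    e ∈ Gc a ↔ ∃ x j i ε, j ≤ 3 ∧ 1 ≤ i ∧ i ≤ a ∧ ε ≤ 1 ∧ e = tri a x j i ε := by
  rw [Gc, Finset.mem_image]
  constructor
  · rintro ⟨⟨x, j, i, ε⟩, hmem, rfl⟩
    simp only [Finset.mem_product, Finset.mem_univ, Finset.mem_range, Finset.mem_Icc,
      true_and] at hmem
    exact ⟨x, j, i, ε, by omega, by omega, by omega, by omega, rfl⟩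
  · rintro ⟨x, j, i, ε, h1, h2, h3, h4, rfl⟩
    refine ⟨⟨x, j, i, ε⟩, ?_, rfl⟩
    simp only [Finset.mem_product, Finset.mem_univ, Finset.mem_range, Finset.mem_Icc,
      true_and]
    omega

lemma Gc_card (a : ℕ) : (Gc a).card = 8*a*(40*a+10) := by
  rw [Gc, Finset.card_image_of_injOn]
  · rw [Finset.card_product, Finset.card_product, Finset.card_product,
      card_univ, ZMod.card, Finset.card_range, Nat.card_Icc, Finset.card_range,
      Nat.add_sub_cancel]
    ring
  · rintro ⟨x, j, i, ε⟩ hmem ⟨x', j', i', ε'⟩ hmem' heq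
    dsimp only at hmem hmem' heq
    simp only [Finset.mem_coe, Finset.mem_product, Finset.mem_univ, Finset.mem_range,
      Finset.mem_Icc, true_and] at hmem hmem'
    obtain ⟨rfl, rfl, rfl, rfl⟩ := tri_inj (by omega) (by omega) (by omega) (by omega)
      (by omega) (by omega) (by omega) (by omega) heq
    rfl

/-! freeness -/

lemma core {a : ℕ} {x x' x'' : ZMod (40*a+10)} {j i ε j' i' ε' j'' i'' ε'' : ℕ}
    (hj : j ≤ 3) (hi1 : 1 ≤ i) (hia : i ≤ a) (hε : ε ≤ 1)
    (hj' : j' ≤ 3) (hi1' : 1 ≤ i') (hia' : i' ≤ a) (hε' : ε' ≤ 1)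
    (hj'' : j'' ≤ 3) (hi1'' : 1 ≤ i'') (hia'' : i'' ≤ a) (hε'' : ε'' ≤ 1)
    (hne : tri a x j i ε ≠ tri a x' j' i' ε')
    (hne1 : tri a x'' j'' i'' ε'' ≠ tri a x j i ε)
    (hne2 : tri a x'' j'' i'' ε'' ≠ tri a x' j' i' ε')
    (hint : 2 ≤ ((tri a x j i ε) ∩ (tri a x' j' i' ε')).card)
    (hun : ((tri a x j i ε) ∪ (tri a x' j' i' ε') ∪ (tri a x'' j'' i'' ε'')).card ≤ 5) :
    False := by
  obtain ⟨Q, hQsub, hQ2⟩ := Finset.exists_subset_card_eq hint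
  have hQe : Q ⊆ tri a x j i ε := hQsub.trans Finset.inter_subset_left
  have hQe' : Q ⊆ tri a x' j' i' ε' := hQsub.trans Finset.inter_subset_right
  obtain ⟨r, hr, hQr⟩ := subpair hj hi1 hia hε hQe hQ2
  obtain ⟨r', hr', hQr'⟩ := subpair hj' hi1' hia' hε' hQe' hQ2
  rw [hQr] at hQr'
  obtain ⟨hx, hjj, hrr, hii⟩ := pr_inj hj hr hi1 hia hj' hr' hi1' hia' hQr'
  subst hx; subst hjj; subst hii
  have hεε : ε ≠ ε' := by rintro rfl; exact hne rfl
  have hs1 := sv_facts (a := a) (i := i) hj hi1 hia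
  have ht1 := tv_facts (a := a) (i := i) hj hi1 hia
  have hst := svtv_ne (a := a) (i := i) hj hi1 hia
  -- the union of the couple
  have hU : tri a x j i ε ∪ tri a x j i ε' =
      ({x + (sv a j i : ZMod (40*a+10)), x + (tv a j i : ZMod (40*a+10)), x,
        x + ((20*a+5 : ℕ) : ZMod (40*a+10))} : Finset (ZMod (40*a+10))) := by
    have e0 : ((aoff a 0 : ℕ) : ZMod (40*a+10)) = ((0:ℕ) : ZMod (40*a+10)) := by
      norm_num [aoff]
    have e1 : ((aoff a 1 : ℕ) : ZMod (40*a+10)) = ((20*a+5 : ℕ) : ZMod (40*a+10)) := by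
      norm_num [aoff]
    interval_cases ε <;> interval_cases ε' <;> [omega; skip; skip; omega] <;>
    · rw [tri, tri, e0, e1]
      rw [Nat.cast_zero, add_zero]
      ext y
      simp only [Finset.mem_union, Finset.mem_insert, Finset.mem_singleton]
      tauto
  have hUcard : ({x + (sv a j i : ZMod (40*a+10)), x + (tv a j i : ZMod (40*a+10)), x,
        x + ((20*a+5 : ℕ) : ZMod (40*a+10))} : Finset (ZMod (40*a+10))).card = 4 := by
    have n1 : x + (sv a j i : ZMod (40*a+10)) ≠ x + (tv a j i : ZMod (40*a+10)) :=
      addne x (by omega) (by omega) hst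
    have n2 : x + (sv a j i : ZMod (40*a+10)) ≠ x := addne0 x (by omega) (by omega)
    have n3 : x + (sv a j i : ZMod (40*a+10)) ≠ x + ((20*a+5 : ℕ) : ZMod (40*a+10)) :=
      addne x (by omega) (by omega) (by omega)
    have n4 : x + (tv a j i : ZMod (40*a+10)) ≠ x := addne0 x (by omega) (by omega)
    have n5 : x + (tv a j i : ZMod (40*a+10)) ≠ x + ((20*a+5 : ℕ) : ZMod (40*a+10)) :=
      addne x (by omega) (by omega) (by omega)
    have n6 : x ≠ x + ((20*a+5 : ℕ) : ZMod (40*a+10)) :=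
      (addne0 x (by omega) (by omega)).symm
    rw [card_insert_of_notMem (by
        simp only [mem_insert, mem_singleton]; push_neg; exact ⟨n1, n2, n3⟩),
      card_insert_of_notMem (by
        simp only [mem_insert, mem_singleton]; push_neg; exact ⟨n4, n5⟩),
      card_insert_of_notMem (by simp only [mem_singleton]; exact n6),
      card_singleton]
  rw [hU] at hun
  have he''card := tri_card (a := a) x'' (j := j'') (i := i'') (ε := ε'') hj'' hi1'' hia''
  have hsum := Finset.card_union_add_card_inter
    ({x + (sv a j i : ZMod (40*a+10)), x + (tv a j i : ZMod (40*a+10)), x,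
        x + ((20*a+5 : ℕ) : ZMod (40*a+10))} : Finset (ZMod (40*a+10)))
    (tri a x'' j'' i'' ε'')
  obtain ⟨Q', hQ'sub, hQ'2⟩ := Finset.exists_subset_card_eq
    (show 2 ≤ (({x + (sv a j i : ZMod (40*a+10)), x + (tv a j i : ZMod (40*a+10)), x,
        x + ((20*a+5 : ℕ) : ZMod (40*a+10))} : Finset (ZMod (40*a+10)))
        ∩ (tri a x'' j'' i'' ε'')).card by omega)
  have hQ'e : Q' ⊆ tri a x'' j'' i'' ε'' := hQ'sub.trans Finset.inter_subset_right
  have hQ'U : Q' ⊆ ({x + (sv a j i : ZMod (40*a+10)), x + (tv a j i : ZMod (40*a+10)), x,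
        x + ((20*a+5 : ℕ) : ZMod (40*a+10))} : Finset (ZMod (40*a+10))) :=
    hQ'sub.trans Finset.inter_subset_left
  obtain ⟨r'', hr'', hQ'r⟩ := subpair hj'' hi1'' hia'' hε'' hQ'e hQ'2
  have finish : ∀ rr, rr ≤ 4 → Q' = pr a x j rr i → False := by
    intro rr hrr hQrr
    have heq : pr a x'' j'' r'' i'' = pr a x j rr i := hQ'r.symm.trans hQrr
    obtain ⟨hx, hjj, hrr2, hii⟩ := pr_inj hj'' hr'' hi1'' hia'' hj hrr hi1 hia heq
    subst hx; subst hjj; subst hii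
    have : ε'' = ε ∨ ε'' = ε' := by omega
    rcases this with rfl | rfl
    · exact hne1 rfl
    · exact hne2 rfl
  rcases two_of_four hQ'U hQ'2 with h | h | h | h | h | h
  · exact finish 0 (by omega) (h.trans (idAB x hj hi1 hia))
  · exact finish 1 (by omega) (h.trans (idA0 x hj hi1 hia))
  · exact finish 3 (by omega) (h.trans (idAm x hj hi1 hia))
  · exact finish 2 (by omega) (h.trans (idB0 x hj hi1 hia))
  · exact finish 4 (by omega) (h.trans (idBm x hj hi1 hia))
  · rw [hQ'r] at h
    exact absurd h.symm (miss_not_pr hj'' hr'' hi1'' hia'')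


lemma count_lemma {α : Type*} [DecidableEq α] {A B C : Finset α} (hA : A.card = 3)
    (hB : B.card = 3) (hC : C.card = 3) (h13 : (A ∩ C).card ≤ 1) (h23 : (B ∩ C).card ≤ 1)
    (h12 : (A ∩ B).card ≤ 1) : 5 < (A ∪ B ∪ C).card := by
  have hu := Finset.card_union_add_card_inter A B
  have hd : ((A ∪ B) ∩ C) ⊆ (A ∩ C) ∪ (B ∩ C) := by
    intro y hy
    simp only [Finset.mem_inter, Finset.mem_union] at hy ⊢
    tauto
  have hdc := le_trans (Finset.card_le_card hd) (Finset.card_union_le (A ∩ C) (B ∩ C))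
  have hu2 := Finset.card_union_add_card_inter (A ∪ B) C
  omega

set_option maxHeartbeats 3200000 in
lemma Gc_good (a : ℕ) : Good (Gc a) := by
  constructor
  · intro e he
    obtain ⟨x, j, i, ε, h1, h2, h3, h4, rfl⟩ := mem_Gc.1 he
    exact tri_card x h1 h2 h3
  · intro e₁ he₁ e₂ he₂ e₃ he₃ h12 h13 h23
    by_contra hle
    push_neg at hle
    obtain ⟨x1, j1, i1, ε1, hj1, hi11, hia1, hε1, rfl⟩ := mem_Gc.1 he₁
    obtain ⟨x2, j2, i2, ε2, hj2, hi12, hia2, hε2, rfl⟩ := mem_Gc.1 he₂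
    obtain ⟨x3, j3, i3, ε3, hj3, hi13, hia3, hε3, rfl⟩ := mem_Gc.1 he₃
    by_cases c12 : 2 ≤ ((tri a x1 j1 i1 ε1) ∩ (tri a x2 j2 i2 ε2)).card
    · exact core hj1 hi11 hia1 hε1 hj2 hi12 hia2 hε2 hj3 hi13 hia3 hε3
        h12 (Ne.symm h13) (Ne.symm h23) c12 hle
    · by_cases c13 : 2 ≤ ((tri a x1 j1 i1 ε1) ∩ (tri a x3 j3 i3 ε3)).card
      · have hsub : (tri a x1 j1 i1 ε1 ∪ tri a x3 j3 i3 ε3 ∪ tri a x2 j2 i2 ε2) ⊆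
            (tri a x1 j1 i1 ε1 ∪ tri a x2 j2 i2 ε2 ∪ tri a x3 j3 i3 ε3) := by
          intro y hy
          simp only [Finset.mem_union] at hy ⊢
          tauto
        exact core hj1 hi11 hia1 hε1 hj3 hi13 hia3 hε3 hj2 hi12 hia2 hε2
          h13 (Ne.symm h12) h23 c13 (le_trans (Finset.card_le_card hsub) hle)
      · by_cases c23 : 2 ≤ ((tri a x2 j2 i2 ε2) ∩ (tri a x3 j3 i3 ε3)).card
        · have hsub : (tri a x2 j2 i2 ε2 ∪ tri a x3 j3 i3 ε3 ∪ tri a x1 j1 i1 ε1) ⊆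
              (tri a x1 j1 i1 ε1 ∪ tri a x2 j2 i2 ε2 ∪ tri a x3 j3 i3 ε3) := by
            intro y hy
            simp only [Finset.mem_union] at hy ⊢
            tauto
          exact core hj2 hi12 hia2 hε2 hj3 hi13 hia3 hε3 hj1 hi11 hia1 hε1
            h23 h12 h13 c23 (le_trans (Finset.card_le_card hsub) hle)
        · have t1 := tri_card (a := a) x1 (ε := ε1) hj1 hi11 hia1
          have t2 := tri_card (a := a) x2 (ε := ε2) hj2 hi12 hia2
          have t3 := tri_card (a := a) x3 (ε := ε3) hj3 hi13 hia3
          have := count_lemma t1 t2 t3 (by omega) (by omega) (by omega)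
          omega


end F53


/-- `f⁽³⁾(n; 5, 3)`: the maximum number of edges of a 3-uniform hypergraph on `n`
vertices containing no 3 edges spanning at most 5 vertices. -/
noncomputable def f53 (n : ℕ) : ℕ :=
  sSup {m | ∃ G : Finset (Finset (Fin n)),
    (∀ e ∈ G, e.card = 3) ∧
    (∀ e₁ ∈ G, ∀ e₂ ∈ G, ∀ e₃ ∈ G,
      e₁ ≠ e₂ → e₁ ≠ e₃ → e₂ ≠ e₃ → 5 < (e₁ ∪ e₂ ∪ e₃).card) ∧
    G.card = m}

lemma f53_eq (n : ℕ) :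
    f53 n = sSup {m | ∃ G : Finset (Finset (Fin n)), F53.Good G ∧ G.card = m} := by
  rw [f53, F53.f53_set_def]

lemma le_f53 {n : ℕ} {G : Finset (Finset (Fin n))} (hG : F53.Good G) : G.card ≤ f53 n := by
  rw [f53_eq]
  exact le_csSup (F53.f53_set_bddAbove n) ⟨G, hG, rfl⟩

lemma f53_exists (n : ℕ) : ∃ G : Finset (Finset (Fin n)), F53.Good G ∧ G.card = f53 n := by
  rw [f53_eq]
  exact Nat.sSup_mem (F53.f53_set_nonempty n) (F53.f53_set_bddAbove n)

lemma f53_upper (n : ℕ) : 5 * f53 n ≤ n * (n - 1) := by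
  obtain ⟨G, hG, hcard⟩ := f53_exists n
  have h := F53.upper_bound G hG
  rwa [Fintype.card_fin, hcard] at h

lemma f53_mono : Monotone f53 := by
  intro n n' h
  rw [f53_eq n]
  apply csSup_le (F53.f53_set_nonempty n)
  rintro m ⟨G, hG, rfl⟩
  obtain ⟨hG', hcard⟩ := F53.good_map (Fin.castLE h) (Fin.castLE_injective h) hG
  calc G.card = _ := hcard.symm
    _ ≤ f53 n' := le_f53 hG'

lemma f53_lower (a : ℕ) : 8*a*(40*a+10) ≤ f53 (40*a+10) := by
  have hcard : Fintype.card (ZMod (40*a+10)) = 40*a+10 := ZMod.card _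
  obtain ⟨hG', hc⟩ := F53.good_map (Fintype.equivFinOfCardEq hcard)
    (Fintype.equivFinOfCardEq hcard).injective (F53.Gc_good a)
  calc 8*a*(40*a+10) = (F53.Gc a).card := (F53.Gc_card a).symm
    _ = _ := hc.symm
    _ ≤ f53 (40*a+10) := le_f53 hG'

/-- `lim_{n → ∞} n⁻² f⁽³⁾(n; 5, 3) = 1/5`. -/
theorem stmt_10 :
    Filter.Tendsto (fun n : ℕ => (f53 n : ℝ) / (n : ℝ) ^ 2)
      Filter.atTop (nhds (1 / 5)) := by
  have upper : ∀ n : ℕ, 1 ≤ n → (f53 n : ℝ) / (n : ℝ)^2 ≤ 1/5 := by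
    intro n hn
    have hN : 5 * f53 n ≤ n * n :=
      le_trans (f53_upper n) (Nat.mul_le_mul_left n (by omega))
    have hc : 5 * (f53 n : ℝ) ≤ (n:ℝ) * n := by exact_mod_cast hN
    have hn0 : (0:ℝ) < (n:ℝ) := by exact_mod_cast hn
    have hn2 : (0:ℝ) < (n:ℝ)^2 := by positivity
    rw [div_le_div_iff₀ hn2 (by norm_num)]
    nlinarith [hc]
  have lower : ∀ n : ℕ, 50 ≤ n →
      ((n:ℝ) - 49)^2/5 / (n:ℝ)^2 ≤ (f53 n : ℝ)/(n:ℝ)^2 := by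
    intro n hn
    have hq1 : 1 ≤ (n - 10) / 40 := by omega
    set q := (n - 10) / 40 with hq
    have hqn : 40*q + 10 ≤ n := by omega
    have hq49 : n - 49 ≤ 40*q := by omega
    have h1 : 8*q*(40*q+10) ≤ f53 n := le_trans (f53_lower q) (f53_mono hqn)
    have h2 : (n-49)*(n-49) ≤ 5 * (8*q*(40*q+10)) :=
      calc (n-49)*(n-49) ≤ (40*q)*(40*q) := Nat.mul_le_mul hq49 hq49
        _ ≤ (40*q)*(40*q+10) := Nat.mul_le_mul_left _ (by omega)
        _ = 5*(8*q*(40*q+10)) := by ring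
    have h3 : (n-49)*(n-49) ≤ 5 * f53 n := le_trans h2 (by omega)
    have hc : ((n:ℝ) - 49) * ((n:ℝ) - 49) ≤ 5 * (f53 n : ℝ) := by
      have hcast : ((n - 49 : ℕ) : ℝ) = (n:ℝ) - 49 := by
        have h49 : (49:ℕ) ≤ n := by omega
        rw [Nat.cast_sub h49]
        norm_num
      have hcle := (Nat.cast_le (α := ℝ)).2 h3
      push_cast at hcle
      rw [hcast] at hcle
      convert hcle using 2 <;> norm_num
    have hn0 : (0:ℝ) < (n:ℝ) := by exact_mod_cast (show 0 < n by omega)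
    have hn2 : (0:ℝ) < (n:ℝ)^2 := by positivity
    apply div_le_div_of_nonneg_right ?_ hn2.le
    nlinarith [hc]
  have hlim : Filter.Tendsto (fun n : ℕ => ((n:ℝ) - 49)^2/5 / (n:ℝ)^2)
      Filter.atTop (nhds (1/5)) := by
    have h49 := tendsto_const_div_atTop_nhds_zero_nat (49:ℝ)
    have key : Filter.Tendsto (fun n : ℕ => (1 - 49/(n:ℝ))^2 / 5) Filter.atTop
        (nhds ((1 - 0)^2 / 5)) :=
      Filter.Tendsto.div_const
        (Filter.Tendsto.pow (Filter.Tendsto.sub tendsto_const_nhds h49) 2) 5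
    norm_num at key
    refine Filter.Tendsto.congr' ?_ key
    filter_upwards [Filter.eventually_ge_atTop 1] with n hn
    have hn0 : (n:ℝ) ≠ 0 := by
      have : (0:ℝ) < (n:ℝ) := by exact_mod_cast hn
      exact this.ne'
    have h1 : 1 - 49/(n:ℝ) = ((n:ℝ) - 49)/(n:ℝ) := by field_simp
    rw [h1, div_pow, div_div, div_div, mul_comm]
  exact tendsto_of_tendsto_of_tendsto_of_le_of_le' hlim tendsto_const_nhds
    (by filter_upwards [Filter.eventually_ge_atTop 50] with n hn using lower n hn)
    (by filter_upwards [Filter.eventually_ge_atTop 1] with n hn using upper n hn)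
end

section
/- Let G be a 3-uniform hypergraph on n vertices with no 4 edges spanning at most 6 vertices, and additionally with no 3 edges spanning at most 4 vertices. Let eᵢ (i = 1,2,3) be the number of vertex pairs with codegree exactly i, divided by n². Then −8e₁/3 + 20e₂/3 + 16e₃ ≤ 0. -/
/-!
Let `mₖ(e)` be the number of pairs of codegree `k` inside the edge `e`. Double counting gives
`∑ₑ mₖ(e) = k · Pₖ`, where `Pₖ` is the number of pairs of codegree `k`, so the claim
`20 P₂ + 48 P₃ ≤ 8 P₁` is `∑ₑ (8 m₁(e) - 10 m₂(e) - 16 m₃(e)) ≥ 0`.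

Four distinct edges `a, b, c, d`, each of `b, c, d` meeting the union of the earlier ones in a
pair, span at most `3 + 1 + 1 + 1 = 6` vertices, so they cannot occur. This forces codegrees
`≤ 3`, a pair of codegree `1` in every edge, and all other pairs of an edge containing a
codegree-`3` pair to have codegree `1`. So the weight `8 m₁ - 10 m₂ - 16 m₃` of an edge is `0`
if `m₃ ≥ 1`, and otherwise `24, 6, -12` for `m₂ = 0, 1, 2`.

The negative weights are discharged along codegree-`2` pairs: with `charge e = -1` if
`m₂(e) = 2` and `1` otherwise, the weight of `e` is at least `6 m₂(e) · charge e`, and the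
sum of these over all edges is `6 ∑ₚ ∑_{e ∋ p} charge e` over the codegree-`2` pairs `p`. Each
inner sum is nonnegative because `p` lies in at most one edge with `m₂ = 2`: two such edges,
together with further edges through their other codegree-`2` pairs, would give three edges on
four vertices or four edges on six vertices.
-/

open Finset

namespace ThreeGraph

variable {α : Type*} [DecidableEq α]

section FiniteSets

variable {p q s t e f a b c d : Finset α}

lemma two_le_card_inter_of_subset (hp : #p = 2) (hs : p ⊆ s) (ht : p ⊆ t) : 2 ≤ #(s ∩ t) :=
  hp ▸ card_le_card (subset_inter hs ht)

lemma three_le_card_union_of_ne (hp : #p = 2) (hq : #q = 2) (hpq : p ≠ q) : 3 ≤ #(p ∪ q) := by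
  by_contra! h
  have hp' := eq_of_subset_of_card_le (subset_union_left : p ⊆ p ∪ q) (by omega)
  have hq' := eq_of_subset_of_card_le (subset_union_right : q ⊆ p ∪ q) (by omega)
  exact hpq (hp'.trans hq'.symm)

lemma union_eq_of_pairs_subset (he : #e = 3) (hp : #p = 2) (hq : #q = 2) (hpq : p ≠ q)
    (hpe : p ⊆ e) (hqe : q ⊆ e) : p ∪ q = e :=
  eq_of_subset_of_card_le (union_subset hpe hqe) (he ▸ three_le_card_union_of_ne hp hq hpq)

lemma eq_of_pairs_subset (he : #e = 3) (hf : #f = 3) (hp : #p = 2) (hq : #q = 2) (hpq : p ≠ q)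
    (hpe : p ⊆ e) (hqe : q ⊆ e) (hpf : p ⊆ f) (hqf : q ⊆ f) : e = f :=
  (union_eq_of_pairs_subset he hp hq hpq hpe hqe).symm.trans
    (union_eq_of_pairs_subset hf hp hq hpq hpf hqf)

lemma card_union_le_add_one (hf : #f = 3) (h : 2 ≤ #(s ∩ f)) : #(s ∪ f) ≤ #s + 1 := by
  have := card_union_add_card_inter s f
  omega

lemma card_union_four_le_six (ha : #a = 3) (hb : #b = 3) (hc : #c = 3) (hd : #d = 3)
    (hab : 2 ≤ #(a ∩ b)) (habc : 2 ≤ #((a ∪ b) ∩ c))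
    (habcd : 2 ≤ #((a ∪ b ∪ c) ∩ d)) :
    #(a ∪ b ∪ c ∪ d) ≤ 6 := by
  have := card_union_le_add_one hb hab
  have := card_union_le_add_one hc habc
  have := card_union_le_add_one hd habcd
  omega

end FiniteSets

def codegree (G : Finset (Finset α)) (p : Finset α) : ℕ := #{e ∈ G | p ⊆ e}

def numPairsOfCodegree (G : Finset (Finset α)) (k : ℕ) (e : Finset α) : ℕ :=
  #{p ∈ e.powersetCard 2 | codegree G p = k}

def pairsOfCodegree [Fintype α] (G : Finset (Finset α)) (k : ℕ) : Finset (Finset α) :=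
  {p ∈ univ.powersetCard 2 | codegree G p = k}

def NoFourEdgesOnSixVertices (G : Finset (Finset α)) : Prop :=
  ∀ e₁ ∈ G, ∀ e₂ ∈ G, ∀ e₃ ∈ G, ∀ e₄ ∈ G,
    e₁ ≠ e₂ → e₁ ≠ e₃ → e₁ ≠ e₄ → e₂ ≠ e₃ → e₂ ≠ e₄ → e₃ ≠ e₄ → 6 < #(e₁ ∪ e₂ ∪ e₃ ∪ e₄)

def NoThreeEdgesOnFourVertices (G : Finset (Finset α)) : Prop :=
  ∀ e₁ ∈ G, ∀ e₂ ∈ G, ∀ e₃ ∈ G, e₁ ≠ e₂ → e₁ ≠ e₃ → e₂ ≠ e₃ → 4 < #(e₁ ∪ e₂ ∪ e₃)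

variable {G : Finset (Finset α)}

lemma one_le_codegree {p e : Finset α} (he : e ∈ G) (hpe : p ⊆ e) : 1 ≤ codegree G p :=
  card_pos.2 ⟨e, mem_filter.2 ⟨he, hpe⟩⟩

lemma exists_ne_of_two_le_codegree {p : Finset α} (e : Finset α) (h : 2 ≤ codegree G p) :
    ∃ f ∈ G, p ⊆ f ∧ f ≠ e := by
  obtain ⟨f, hf, hfe⟩ := exists_mem_ne h e
  exact ⟨f, (mem_filter.1 hf).1, (mem_filter.1 hf).2, hfe⟩

lemma false_of_four_edges (h3 : ∀ e ∈ G, #e = 3) (h64 : NoFourEdgesOnSixVertices G)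
    {a b c d : Finset α} (ha : a ∈ G) (hb : b ∈ G) (hc : c ∈ G) (hd : d ∈ G)
    (hab : a ≠ b) (hac : a ≠ c) (had : a ≠ d) (hbc : b ≠ c) (hbd : b ≠ d) (hcd : c ≠ d)
    (hb' : 2 ≤ #(a ∩ b)) (hc' : 2 ≤ #((a ∪ b) ∩ c)) (hd' : 2 ≤ #((a ∪ b ∪ c) ∩ d)) : False :=
  (h64 a ha b hb c hc d hd hab hac had hbc hbd hcd).not_ge
    (card_union_four_le_six (h3 a ha) (h3 b hb) (h3 c hc) (h3 d hd) hb' hc' hd')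

lemma codegree_le_three (h3 : ∀ e ∈ G, #e = 3) (h64 : NoFourEdgesOnSixVertices G)
    {p : Finset α} (hp : #p = 2) : codegree G p ≤ 3 := by
  by_contra! h
  obtain ⟨a, ha⟩ := card_pos.1 (h.trans' (by norm_num) : 0 < codegree G p)
  obtain ⟨b, c, d, hb, hc, hd, hbc, hbd, hcd⟩ :=
    two_lt_card_iff.1 (show 2 < #({e ∈ G | p ⊆ e}.erase a) by
      rw [card_erase_of_mem ha]; exact Nat.lt_sub_of_add_lt h)
  simp only [mem_erase, mem_filter] at ha hb hc hd
  obtain ⟨haG, hpa⟩ := ha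
  exact false_of_four_edges h3 h64 haG hb.2.1 hc.2.1 hd.2.1 hb.1.symm hc.1.symm hd.1.symm
    hbc hbd hcd (two_le_card_inter_of_subset hp hpa hb.2.2)
    (two_le_card_inter_of_subset hp (hpa.trans subset_union_left) hc.2.2)
    (two_le_card_inter_of_subset hp (hpa.trans (subset_union_left.trans subset_union_left)) hd.2.2)

lemma exists_codegree_eq_one (h3 : ∀ e ∈ G, #e = 3) (h64 : NoFourEdgesOnSixVertices G)
    {e : Finset α} (he : e ∈ G) : ∃ p ∈ e.powersetCard 2, codegree G p = 1 := by
  by_contra! h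
  have h2 : ∀ p ∈ e.powersetCard 2, 2 ≤ codegree G p := fun p hp => by
    have := one_le_codegree he (mem_powersetCard.1 hp).1
    have := h p hp
    omega
  have hpairs : 2 < #(e.powersetCard 2) := by rw [card_powersetCard, h3 e he]; decide
  obtain ⟨p, q, r, hp, hq, hr, hpq, hpr, hqr⟩ := two_lt_card_iff.1 hpairs
  obtain ⟨f, hf, hpf, hfe⟩ := exists_ne_of_two_le_codegree e (h2 p hp)
  obtain ⟨g, hg, hqg, hge⟩ := exists_ne_of_two_le_codegree e (h2 q hq)
  obtain ⟨k, hk, hrk, hke⟩ := exists_ne_of_two_le_codegree e (h2 r hr)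
  rw [mem_powersetCard] at hp hq hr
  have he3 := h3 e he
  have hfg : f ≠ g := fun hfg => hfe <|
    (eq_of_pairs_subset he3 (h3 f hf) hp.2 hq.2 hpq hp.1 hq.1 hpf (hfg ▸ hqg)).symm
  have hfk : f ≠ k := fun hfk => hfe <|
    (eq_of_pairs_subset he3 (h3 f hf) hp.2 hr.2 hpr hp.1 hr.1 hpf (hfk ▸ hrk)).symm
  have hgk : g ≠ k := fun hgk => hge <|
    (eq_of_pairs_subset he3 (h3 g hg) hq.2 hr.2 hqr hq.1 hr.1 hqg (hgk ▸ hrk)).symm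
  exact false_of_four_edges h3 h64 he hf hg hk hfe.symm hge.symm hke.symm hfg hfk hgk
    (two_le_card_inter_of_subset hp.2 hp.1 hpf)
    (two_le_card_inter_of_subset hq.2 (hq.1.trans subset_union_left) hqg)
    (two_le_card_inter_of_subset hr.2
      (hr.1.trans (subset_union_left.trans subset_union_left)) hrk)

lemma codegree_eq_one_of_codegree_eq_three (h3 : ∀ e ∈ G, #e = 3)
    (h64 : NoFourEdgesOnSixVertices G) {e p q : Finset α} (he : e ∈ G)
    (hp : p ∈ e.powersetCard 2) (hq : q ∈ e.powersetCard 2) (hqp : q ≠ p)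
    (hdp : codegree G p = 3) : codegree G q = 1 := by
  rw [mem_powersetCard] at hp hq
  by_contra h
  have := one_le_codegree he hq.1
  obtain ⟨g, hg, hqg, hge⟩ := exists_ne_of_two_le_codegree (G := G) (p := q) e (by omega)
  obtain ⟨f₁, f₂, hf₁₂, hf⟩ := card_eq_two.1 (show #({f ∈ G | p ⊆ f}.erase e) = 2 by
    rw [card_erase_of_mem (mem_filter.2 ⟨he, hp.1⟩)]; exact congrArg (· - 1) hdp)
  have hf₁ : f₁ ∈ {f ∈ G | p ⊆ f}.erase e := hf ▸ mem_insert_self _ _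
  have hf₂ : f₂ ∈ {f ∈ G | p ⊆ f}.erase e := hf ▸ mem_insert_of_mem (mem_singleton_self _)
  simp only [mem_erase, mem_filter] at hf₁ hf₂
  have he3 := h3 e he
  have hgf : ∀ f ∈ G, p ⊆ f → g ≠ f := fun f hfG hpf hgf => hge <|
    (eq_of_pairs_subset he3 (h3 g hg) hp.2 hq.2 hqp.symm hp.1 hq.1 (hgf ▸ hpf) hqg).symm
  exact false_of_four_edges h3 h64 he hf₁.2.1 hf₂.2.1 hg hf₁.1.symm hf₂.1.symm hge.symm hf₁₂
    (hgf f₁ hf₁.2.1 hf₁.2.2).symm (hgf f₂ hf₂.2.1 hf₂.2.2).symm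
    (two_le_card_inter_of_subset hp.2 hp.1 hf₁.2.2)
    (two_le_card_inter_of_subset hp.2 (hp.1.trans subset_union_left) hf₂.2.2)
    (two_le_card_inter_of_subset hq.2
      (hq.1.trans (subset_union_left.trans subset_union_left)) hqg)

lemma false_of_shared_pair (h3 : ∀ e ∈ G, #e = 3) (h64 : NoFourEdgesOnSixVertices G)
    (h43 : NoThreeEdgesOnFourVertices G) {e f p q r : Finset α} (he : e ∈ G) (hf : f ∈ G)
    (hef : e ≠ f) (hp : #p = 2) (hpe : p ⊆ e) (hpf : p ⊆ f)
    (hq : q ∈ e.powersetCard 2) (hqp : q ≠ p) (hdq : 2 ≤ codegree G q)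
    (hr : r ∈ f.powersetCard 2) (hrp : r ≠ p) (hdr : 2 ≤ codegree G r) : False := by
  rw [mem_powersetCard] at hq hr
  obtain ⟨g, hg, hqg, hge⟩ := exists_ne_of_two_le_codegree e hdq
  obtain ⟨k, hk, hrk, hkf⟩ := exists_ne_of_two_le_codegree f hdr
  have he3 := h3 e he
  have hf3 := h3 f hf
  have hgf : g ≠ f := fun h =>
    hef (eq_of_pairs_subset he3 hf3 hp hq.2 hqp.symm hpe hq.1 hpf (h ▸ hqg))
  have hke : k ≠ e := fun h =>
    hef (eq_of_pairs_subset he3 hf3 hp hr.2 hrp.symm hpe (h ▸ hrk) hpf hr.1)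
  by_cases hgk : g = k
  · subst hgk
    have hqr : q ≠ r := fun h =>
      hef (eq_of_pairs_subset he3 hf3 hp hq.2 hqp.symm hpe hq.1 hpf (h ▸ hr.1))
    have hg_sub : g ⊆ e ∪ f :=
      union_eq_of_pairs_subset (h3 g hg) hq.2 hr.2 hqr hqg hrk ▸ union_subset_union hq.1 hr.1
    have hcard : #(e ∪ f ∪ g) ≤ 4 := by
      rw [union_eq_left.2 hg_sub]
      have := card_union_le_add_one hf3 (two_le_card_inter_of_subset hp hpe hpf)
      omega
    exact (h43 e he f hf g hg hef hge.symm hgf.symm).not_ge hcard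
  · exact false_of_four_edges h3 h64 he hf hg hk hef hge.symm hke.symm hgf.symm hkf.symm hgk
      (two_le_card_inter_of_subset hp hpe hpf)
      (two_le_card_inter_of_subset hq.2 (hq.1.trans subset_union_left) hqg)
      (two_le_card_inter_of_subset hr.2
        (hr.1.trans (subset_union_right.trans subset_union_left)) hrk)

lemma card_filter_numPairsOfCodegree_two_le_one (h3 : ∀ e ∈ G, #e = 3)
    (h64 : NoFourEdgesOnSixVertices G) (h43 : NoThreeEdgesOnFourVertices G)
    {p : Finset α} (hp : #p = 2) :
    #{e ∈ {e ∈ G | p ⊆ e} | numPairsOfCodegree G 2 e = 2} ≤ 1 := by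
  by_contra! h
  obtain ⟨e, he, f, hf, hef⟩ := one_lt_card.1 h
  simp only [mem_filter] at he hf
  have other_pair : ∀ e, numPairsOfCodegree G 2 e = 2 →
      ∃ q ∈ e.powersetCard 2, q ≠ p ∧ codegree G q = 2 := by
    intro e h2
    obtain ⟨q, hq, hqp⟩ := exists_mem_ne (show 1 < numPairsOfCodegree G 2 e by omega) p
    exact ⟨q, (mem_filter.1 hq).1, hqp, (mem_filter.1 hq).2⟩
  obtain ⟨q, hq, hqp, hdq⟩ := other_pair e he.2
  obtain ⟨r, hr, hrp, hdr⟩ := other_pair f hf.2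
  exact false_of_shared_pair h3 h64 h43 he.1.1 hf.1.1 hef hp he.1.2 hf.1.2
    hq hqp hdq.ge hr hrp hdr.ge

lemma numPairsOfCodegree_add_add (h3 : ∀ e ∈ G, #e = 3) (h64 : NoFourEdgesOnSixVertices G)
    {e : Finset α} (he : e ∈ G) :
    numPairsOfCodegree G 1 e + numPairsOfCodegree G 2 e + numPairsOfCodegree G 3 e = 3 := by
  have := card_eq_sum_card_fiberwise (f := codegree G) (s := e.powersetCard 2) (t := Icc 1 3)
    fun p hp => mem_Icc.2 ⟨one_le_codegree he (mem_powersetCard.1 hp).1,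
      codegree_le_three h3 h64 (mem_powersetCard.1 hp).2⟩
  rw [card_powersetCard, h3 e he, show Icc 1 3 = {1, 2, 3} from rfl] at this
  simpa [numPairsOfCodegree, add_assoc] using this.symm

lemma two_le_numPairsOfCodegree_one (h3 : ∀ e ∈ G, #e = 3) (h64 : NoFourEdgesOnSixVertices G)
    {e : Finset α} (he : e ∈ G) (h : 0 < numPairsOfCodegree G 3 e) :
    2 ≤ numPairsOfCodegree G 1 e := by
  obtain ⟨p, hp⟩ := card_pos.1 h
  rw [mem_filter] at hp
  have hsub : (e.powersetCard 2).erase p ⊆ {q ∈ e.powersetCard 2 | codegree G q = 1} := by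
    intro q hq
    rw [mem_erase] at hq
    exact mem_filter.2 ⟨hq.2, codegree_eq_one_of_codegree_eq_three h3 h64 he hp.1 hq.2 hq.1 hp.2⟩
  calc 2 = #((e.powersetCard 2).erase p) := by
        rw [card_erase_of_mem hp.1, card_powersetCard, h3 e he]; rfl
    _ ≤ numPairsOfCodegree G 1 e := card_le_card hsub

def charge (G : Finset (Finset α)) (e : Finset α) : ℤ :=
  if numPairsOfCodegree G 2 e = 2 then -1 else 1

lemma six_mul_numPairsOfCodegree_mul_charge_le (h3 : ∀ e ∈ G, #e = 3)
    (h64 : NoFourEdgesOnSixVertices G) {e : Finset α} (he : e ∈ G) :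
    6 * (numPairsOfCodegree G 2 e * charge G e) ≤
      8 * (numPairsOfCodegree G 1 e : ℤ) - 10 * numPairsOfCodegree G 2 e
        - 16 * numPairsOfCodegree G 3 e := by
  obtain ⟨p, hp, hdp⟩ := exists_codegree_eq_one h3 h64 he
  have h1 : 0 < numPairsOfCodegree G 1 e := card_pos.2 ⟨p, mem_filter.2 ⟨hp, hdp⟩⟩
  have h13 := two_le_numPairsOfCodegree_one h3 h64 he
  have hsum := numPairsOfCodegree_add_add h3 h64 he
  unfold charge
  split_ifs <;> omega

lemma sum_charge_nonneg (h3 : ∀ e ∈ G, #e = 3) (h64 : NoFourEdgesOnSixVertices G)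
    (h43 : NoThreeEdgesOnFourVertices G) {p : Finset α} (hp : #p = 2)
    (hdp : codegree G p = 2) : 0 ≤ ∑ e ∈ G with p ⊆ e, charge G e := by
  have hle := card_filter_numPairsOfCodegree_two_le_one h3 h64 h43 hp
  have htot := card_filter_add_card_filter_not (s := {e ∈ G | p ⊆ e})
    (fun e => numPairsOfCodegree G 2 e = 2)
  rw [codegree] at hdp
  simp only [charge, sum_ite, sum_const, smul_neg, nsmul_eq_mul, mul_one]
  omega

section DoubleCounting

variable [Fintype α]

lemma sum_sum_powersetCard_comm {M : Type*} [AddCommMonoid M] (G : Finset (Finset α)) (r : ℕ)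
    (Q : Finset α → Prop) [DecidablePred Q] (φ : Finset α → M) :
    ∑ e ∈ G, ∑ p ∈ e.powersetCard r with Q p, φ e =
      ∑ p ∈ univ.powersetCard r with Q p, ∑ e ∈ G with p ⊆ e, φ e :=
  sum_comm' fun e p => by simp only [mem_filter, mem_powersetCard, subset_univ, true_and]; tauto

lemma sum_numPairsOfCodegree (G : Finset (Finset α)) (k : ℕ) :
    ∑ e ∈ G, numPairsOfCodegree G k e = k * #(pairsOfCodegree G k) := by
  calc ∑ e ∈ G, numPairsOfCodegree G k e
      = ∑ p ∈ pairsOfCodegree G k, codegree G p := by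
        simp only [numPairsOfCodegree, pairsOfCodegree, card_eq_sum_ones,
          sum_sum_powersetCard_comm, codegree]
    _ = k * #(pairsOfCodegree G k) :=
        (sum_const_nat fun _ hp => (mem_filter.1 hp).2).trans (mul_comm _ _)

lemma sum_numPairsOfCodegree_two_mul_charge (G : Finset (Finset α)) :
    ∑ e ∈ G, (numPairsOfCodegree G 2 e : ℤ) * charge G e =
      ∑ p ∈ pairsOfCodegree G 2, ∑ e ∈ G with p ⊆ e, charge G e := by
  simp only [numPairsOfCodegree, ← nsmul_eq_mul, ← sum_const, sum_sum_powersetCard_comm]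
  rfl

theorem twenty_mul_card_pairsOfCodegree_two_add_le (h3 : ∀ e ∈ G, #e = 3)
    (h64 : NoFourEdgesOnSixVertices G) (h43 : NoThreeEdgesOnFourVertices G) :
    20 * #(pairsOfCodegree G 2) + 48 * #(pairsOfCodegree G 3) ≤ 8 * #(pairsOfCodegree G 1) := by
  have hcharge : 0 ≤ ∑ e ∈ G, (numPairsOfCodegree G 2 e : ℤ) * charge G e := by
    rw [sum_numPairsOfCodegree_two_mul_charge]
    refine sum_nonneg fun p hp => ?_
    simp only [pairsOfCodegree, mem_filter, mem_powersetCard] at hp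
    exact sum_charge_nonneg h3 h64 h43 hp.1.2 hp.2
  have hedges := sum_le_sum fun e he => six_mul_numPairsOfCodegree_mul_charge_le h3 h64 he
  rw [← mul_sum] at hedges
  simp only [sum_sub_distrib, ← mul_sum, ← Nat.cast_sum, sum_numPairsOfCodegree] at hedges
  push_cast at hedges
  omega

end DoubleCounting

end ThreeGraph

/-- For an `F⁽³⁾(6,4)`-free and `F⁽³⁾(4,3)`-free 3-uniform hypergraph on `n` vertices,
with `eᵢ` the number of pairs of codegree `i` divided by `n²`, one has
`-8e₁/3 + 20e₂/3 + 16e₃ ≤ 0`. -/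
theorem stmt_12 (n : ℕ) (G : Finset (Finset (Fin n)))
    (h3 : ∀ e ∈ G, e.card = 3)
    (hfree64 : ∀ e₁ ∈ G, ∀ e₂ ∈ G, ∀ e₃ ∈ G, ∀ e₄ ∈ G,
      e₁ ≠ e₂ → e₁ ≠ e₃ → e₁ ≠ e₄ → e₂ ≠ e₃ → e₂ ≠ e₄ → e₃ ≠ e₄ →
        6 < (e₁ ∪ e₂ ∪ e₃ ∪ e₄).card)
    (hfree43 : ∀ e₁ ∈ G, ∀ e₂ ∈ G, ∀ e₃ ∈ G,
      e₁ ≠ e₂ → e₁ ≠ e₃ → e₂ ≠ e₃ → 4 < (e₁ ∪ e₂ ∪ e₃).card)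
    (e₁ e₂ e₃ : ℝ)
    (he₁ : e₁ = (((Finset.univ.powersetCard 2).filter
      (fun p : Finset (Fin n) => (G.filter (fun e => p ⊆ e)).card = 1)).card : ℝ) / n ^ 2)
    (he₂ : e₂ = (((Finset.univ.powersetCard 2).filter
      (fun p : Finset (Fin n) => (G.filter (fun e => p ⊆ e)).card = 2)).card : ℝ) / n ^ 2)
    (he₃ : e₃ = (((Finset.univ.powersetCard 2).filter
      (fun p : Finset (Fin n) => (G.filter (fun e => p ⊆ e)).card = 3)).card : ℝ) / n ^ 2) :
    -8 * e₁ / 3 + 20 * e₂ / 3 + 16 * e₃ ≤ 0 := by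
  have hcount := (Nat.cast_le (α := ℝ)).2
    (ThreeGraph.twenty_mul_card_pairsOfCodegree_two_add_le h3 hfree64 hfree43)
  push_cast at hcount
  subst he₁ he₂ he₃
  rw [show ∀ a b c : ℝ, -8 * (a / n ^ 2) / 3 + 20 * (b / n ^ 2) / 3 + 16 * (c / n ^ 2) =
      (20 * b + 48 * c - 8 * a) / n ^ 2 / 3 by intros; ring]
  exact div_nonpos_of_nonpos_of_nonneg
    (div_nonpos_of_nonpos_of_nonneg (sub_nonpos.2 hcount) (by positivity)) (by norm_num)
end

section
/- Every 3-uniform hypergraph on n vertices with no 4 edges spanning at most 6 vertices has at most (3/14)·n² edges. -/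
/-!
Give every pair of vertices unit weight, split evenly among the edges through it; the edges then
carry total weight at most `n choose 2`. Four edges through a pair span six vertices, so codegrees
are at most 3, and an edge with at most one pair of codegree `≥ 2` gets weight at least `7/3`.
If an edge `e` has two such pairs `p ⊆ f` and `q ⊆ g`, then `e ∪ f ∪ g` has at most five vertices
and no other edge meets it in two vertices. So `e` gets exactly `1/2 + 1/2 + 1`, and either
`e ∪ f ∪ g` is a 4-set carrying three edges and meeting no other edge, or `f` and `g` have only one
heavy pair each and can afford to give `e` two thirds of `p` and `q`. After this transfer only the
edges of those isolated `K₄⁻` fall short of `7/3`, by `1/3`; the `K₄⁻` are vertex-disjoint, so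
there are at most `3n/4` such edges and `7|G| - 3n/4 ≤ 3 n (n - 1) / 2`.
-/

open Finset

namespace TripleSystem

variable {α : Type*}

section

variable [DecidableEq α]

theorem card_union_add_card_le {s t u : Finset α} (hs : u ⊆ s) (ht : u ⊆ t) :
    #(s ∪ t) + #u ≤ #s + #t := by
  have := card_le_card (subset_inter hs ht)
  have := card_union_add_card_inter s t
  omega

theorem union_eq_of_mem_powersetCard_two {e p r : Finset α} (he : #e = 3)
    (hp : p ∈ e.powersetCard 2) (hr : r ∈ e.powersetCard 2) (hpr : p ≠ r) : p ∪ r = e := by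
  rw [mem_powersetCard] at hp hr
  refine eq_of_subset_of_card_le (union_subset hp.1 hr.1) ?_
  by_contra hlt
  have hpu : p = p ∪ r := eq_of_subset_of_card_le subset_union_left (by omega)
  exact hpr (eq_of_subset_of_card_le (subset_union_right.trans hpu.symm.subset) (by omega)).symm

theorem eq_of_two_pairs_subset {e h p r : Finset α} (he : #e = 3) (hh : #h = 3)
    (hp : p ∈ e.powersetCard 2) (hr : r ∈ e.powersetCard 2) (hpr : p ≠ r)
    (hph : p ⊆ h) (hrh : r ⊆ h) : h = e :=
  (eq_of_subset_of_card_le (union_eq_of_mem_powersetCard_two he hp hr hpr ▸ union_subset hph hrh)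
    (by omega)).symm

theorem sum_eq_sum_add_card_sdiff {β M : Type*} [DecidableEq β] [AddCommMonoidWithOne M]
    {s t : Finset β} (hts : t ⊆ s) {f : β → M} (hf : ∀ b ∈ s \ t, f b = 1) : ∑ b ∈ s, f b = ∑ b ∈ t, f b + #(s \ t) := by
  rw [← sum_sdiff hts, sum_congr rfl hf, sum_const, nsmul_one, add_comm]

theorem sum_sum_powersetCard_le_choose [Fintype α] (G : Finset (Finset α)) (k : ℕ)
    (c : Finset α → Finset α → ℝ) (hc : ∀ p : Finset α, ∑ e ∈ G with p ⊆ e, c p e ≤ 1) :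
    ∑ e ∈ G, ∑ p ∈ e.powersetCard k, c p e ≤ (Fintype.card α).choose k := by
  rw [sum_comm' (t' := univ.powersetCard k) (s' := fun p => {e ∈ G | p ⊆ e})
    (by intro e p; simp only [mem_powersetCard, mem_filter, subset_univ, true_and]; tauto)]
  calc _ ≤ ∑ _p ∈ univ.powersetCard k, (1 : ℝ) := sum_le_sum fun p _ => hc p
    _ = _ := by simp [card_powersetCard]

def F64Free (G : Finset (Finset α)) : Prop :=
  ∀ e₁ ∈ G, ∀ e₂ ∈ G, ∀ e₃ ∈ G, ∀ e₄ ∈ G,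
    e₁ ≠ e₂ → e₁ ≠ e₃ → e₁ ≠ e₄ → e₂ ≠ e₃ → e₂ ≠ e₄ → e₃ ≠ e₄ → 6 < #(e₁ ∪ e₂ ∪ e₃ ∪ e₄)

def codeg (G : Finset (Finset α)) (p : Finset α) : ℕ := #{e ∈ G | p ⊆ e}

section

variable {G : Finset (Finset α)}

theorem one_le_codeg {e p : Finset α} (he : e ∈ G) (hp : p ⊆ e) : 1 ≤ codeg G p :=
  card_pos.2 ⟨e, mem_filter.2 ⟨he, hp⟩⟩

theorem exists_ne_of_two_le_codeg {p : Finset α} (h : 2 ≤ codeg G p) (e : Finset α) :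
    ∃ f ∈ G, p ⊆ f ∧ f ≠ e := by
  obtain ⟨f, hf, hfe⟩ := exists_mem_ne h e
  exact ⟨f, (mem_filter.1 hf).1, (mem_filter.1 hf).2, hfe⟩

theorem F64Free.codeg_le_three (hG : F64Free G) (h3 : ∀ e ∈ G, #e = 3) {p : Finset α}
    (hp : #p = 2) : codeg G p ≤ 3 := by
  by_contra! h4
  set s := {e ∈ G | p ⊆ e}
  have h4 : 3 < #s := h4
  obtain ⟨e₁, he₁⟩ := card_pos.1 (by omega : 0 < #s)
  obtain ⟨e₂, he₂, e₃, he₃, e₄, he₄, h₂₃, h₂₄, h₃₄⟩ :=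
    two_lt_card.1 (by rw [card_erase_of_mem he₁]; omega : 2 < #(s.erase e₁))
  rw [mem_erase] at he₂ he₃ he₄
  have hmem : ∀ e ∈ s, e ∈ G ∧ p ⊆ e := fun e he => mem_filter.1 he
  obtain ⟨hG₁, hp₁⟩ := hmem e₁ he₁
  obtain ⟨hG₂, hp₂⟩ := hmem e₂ he₂.2
  obtain ⟨hG₃, hp₃⟩ := hmem e₃ he₃.2
  obtain ⟨hG₄, hp₄⟩ := hmem e₄ he₄.2
  have := card_union_add_card_le hp₁ hp₂
  have := card_union_add_card_le (hp₁.trans subset_union_left : p ⊆ e₁ ∪ e₂) hp₃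
  have := card_union_add_card_le
    (hp₁.trans (subset_union_left.trans subset_union_left) : p ⊆ e₁ ∪ e₂ ∪ e₃) hp₄
  have := hG e₁ hG₁ e₂ hG₂ e₃ hG₃ e₄ hG₄ he₂.1.symm he₃.1.symm he₄.1.symm h₂₃ h₂₄ h₃₄
  rw [h3 _ hG₁, h3 _ hG₂, h3 _ hG₃, h3 _ hG₄] at *
  omega

theorem F64Free.card_inter_add_three_lt (hG : F64Free G) (h3 : ∀ e ∈ G, #e = 3)
    {e f g h : Finset α} (he : e ∈ G) (hf : f ∈ G) (hg : g ∈ G) (hh : h ∈ G)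
    (hef : e ≠ f) (heg : e ≠ g) (heh : e ≠ h) (hfg : f ≠ g) (hfh : f ≠ h) (hgh : g ≠ h) :
    #(h ∩ (e ∪ f ∪ g)) + 3 < #(e ∪ f ∪ g) := by
  have hfree := hG e he f hf g hg h hh hef heg heh hfg hfh hgh
  have hunion := card_union_add_card_inter (e ∪ f ∪ g) h
  rw [h3 h hh, inter_comm] at hunion
  omega

end

def HasTwoHeavyPairs (G : Finset (Finset α)) (e : Finset α) : Prop :=
  ∃ p ∈ e.powersetCard 2, ∃ q ∈ e.powersetCard 2, p ≠ q ∧ 2 ≤ codeg G p ∧ 2 ≤ codeg G q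

def IsTransferPair (G : Finset (Finset α)) (p : Finset α) : Prop :=
  codeg G p = 2 ∧ (∃ e ∈ G, p ⊆ e ∧ HasTwoHeavyPairs G e) ∧ ∃ f ∈ G, p ⊆ f ∧ ¬HasTwoHeavyPairs G f

open Classical in
noncomputable def share (G : Finset (Finset α)) (p e : Finset α) : ℝ :=
  if IsTransferPair G p then if HasTwoHeavyPairs G e then 2 / 3 else 1 / 3 else (codeg G p : ℝ)⁻¹

theorem sum_share_le_one (G : Finset (Finset α)) (p : Finset α) :
    ∑ e ∈ G with p ⊆ e, share G p e ≤ 1 := by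
  by_cases hT : IsTransferPair G p
  · obtain ⟨hp2, ⟨e, he, hpe, hme⟩, f, hf, hpf, hmf⟩ := id hT
    have hef : e ≠ f := by rintro rfl; exact hmf hme
    have hfilter : {h ∈ G | p ⊆ h} = {e, f} :=
      (eq_of_subset_of_card_le (by simp [insert_subset_iff, he, hpe, hf, hpf])
        (by rw [card_pair hef]; exact hp2.le)).symm
    rw [hfilter, sum_pair hef]
    simp only [share, if_pos hT, if_pos hme, if_neg hmf]
    norm_num
  · simp only [share, if_neg hT, sum_const, nsmul_eq_mul]
    exact mul_inv_le_one

section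

variable {G : Finset (Finset α)} {p e : Finset α}

theorem share_eq_one (h : codeg G p = 1) : share G p e = 1 := by
  simp [share, IsTransferPair, h]

theorem third_le_share (hpos : 1 ≤ codeg G p) (hle : codeg G p ≤ 3) : 1 / 3 ≤ share G p e := by
  unfold share
  split_ifs
  · norm_num
  · norm_num
  · interval_cases codeg G p <;> norm_num

theorem half_le_share (h : codeg G p = 2) (hm : HasTwoHeavyPairs G e) : 1 / 2 ≤ share G p e := by
  unfold share
  split_ifs
  · norm_num
  · norm_num [h]

theorem share_of_isTransferPair (hT : IsTransferPair G p) (hm : HasTwoHeavyPairs G e) :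
    share G p e = 2 / 3 := by
  simp [share, hT, hm]

end

def IsIsolatedK4Minus (G : Finset (Finset α)) (S : Finset α) : Prop :=
  #S = 4 ∧ (∀ h ∈ G, (h ∩ S).Nonempty → h ⊆ S) ∧ #{h ∈ G | h ⊆ S} = 3

def IsInIsolatedK4Minus (G : Finset (Finset α)) (e : Finset α) : Prop :=
  ∃ S, e ⊆ S ∧ IsIsolatedK4Minus G S

section

variable {G : Finset (Finset α)}

theorem card_filter_subset_le_one (h3 : ∀ e ∈ G, #e = 3) {T : Finset α} (hT : #T ≤ 3) :
    #{h ∈ G | h ⊆ T} ≤ 1 := by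
  refine card_le_one.2 fun h hh k hk => ?_
  rw [mem_filter] at hh hk
  rw [eq_of_subset_of_card_le hh.2 (by rw [h3 h hh.1]; omega),
    eq_of_subset_of_card_le hk.2 (by rw [h3 k hk.1]; omega)]

theorem IsIsolatedK4Minus.disjoint (h3 : ∀ e ∈ G, #e = 3) {S S' : Finset α}
    (hS : IsIsolatedK4Minus G S) (hS' : IsIsolatedK4Minus G S') (hne : S ≠ S') :
    Disjoint S S' := by
  obtain ⟨hS4, -, hS3⟩ := hS
  obtain ⟨hS'4, hS'iso, -⟩ := hS'
  rw [disjoint_left]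
  intro v hvS hvS'
  obtain ⟨e, he, hve⟩ : ∃ e ∈ {h ∈ G | h ⊆ S}, v ∈ e := by
    by_contra! hv
    have hsub : {h ∈ G | h ⊆ S} ⊆ {h ∈ G | h ⊆ S.erase v} := fun h hh =>
      mem_filter.2 ⟨(mem_filter.1 hh).1, subset_erase.2 ⟨(mem_filter.1 hh).2, hv h hh⟩⟩
    have := card_le_card hsub
    have := card_filter_subset_le_one h3 (T := S.erase v) (by rw [card_erase_of_mem hvS]; omega)
    omega
  rw [mem_filter] at he
  have heS' : e ⊆ S' := hS'iso e he.1 ⟨v, mem_inter.2 ⟨hve, hvS'⟩⟩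
  -- two 3-subsets of the 4-set `S` meet, so every edge inside `S` meets `e` and lies in `S'` too
  have hsub : {h ∈ G | h ⊆ S} ⊆ {h ∈ G | h ⊆ S ∩ S'} := by
    intro h hh
    rw [mem_filter] at hh ⊢
    have hhe : (h ∩ e).Nonempty := inter_nonempty_of_card_lt_card_add_card hh.2 he.2
      (by rw [h3 h hh.1, h3 e he.1]; omega)
    exact ⟨hh.1, subset_inter hh.2 (hS'iso h hh.1 (hhe.mono (inter_subset_inter_left heS')))⟩
  have hSS' : #(S ∩ S') ≤ 3 := by
    by_contra! h4
    have hS : S ∩ S' = S := eq_of_subset_of_card_le inter_subset_left (by omega)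
    exact hne (eq_of_subset_of_card_le (hS ▸ inter_subset_right) (by omega))
  have := card_le_card hsub
  have := card_filter_subset_le_one h3 hSS'
  omega

open Classical in
theorem four_mul_card_filter_isInIsolatedK4Minus_le [Fintype α] (h3 : ∀ e ∈ G, #e = 3) :
    4 * #{e ∈ G | IsInIsolatedK4Minus G e} ≤ 3 * Fintype.card α := by
  set Q : Finset (Finset α) := {S | IsIsolatedK4Minus G S}
  have hQ : ∀ S ∈ Q, IsIsolatedK4Minus G S := fun S hS => (mem_filter.1 hS).2
  have hcardQ : 4 * #Q ≤ Fintype.card α := by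
    have hdisj : (Q : Set (Finset α)).PairwiseDisjoint id := fun S hS S' hS' hne =>
      (hQ S hS).disjoint h3 (hQ S' hS') hne
    calc 4 * #Q = ∑ S ∈ Q, #S := by rw [sum_congr rfl fun S hS => (hQ S hS).1, sum_const,
          smul_eq_mul, mul_comm]
      _ = #(Q.biUnion id) := (card_biUnion hdisj).symm
      _ ≤ Fintype.card α := card_le_univ _
  have hedges : #{e ∈ G | IsInIsolatedK4Minus G e} ≤ 3 * #Q := by
    calc _ ≤ #(Q.biUnion fun S => {h ∈ G | h ⊆ S}) := by
          refine card_le_card fun e he => ?_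
          obtain ⟨heG, S, heS, hS⟩ := mem_filter.1 he
          exact mem_biUnion.2 ⟨S, mem_filter.2 ⟨mem_univ S, hS⟩, mem_filter.2 ⟨heG, heS⟩⟩
      _ ≤ ∑ S ∈ Q, #{h ∈ G | h ⊆ S} := card_biUnion_le
      _ = 3 * #Q := by rw [sum_congr rfl fun S hS => (hQ S hS).2.2, sum_const, smul_eq_mul,
          mul_comm]
  omega

end

end

structure Fork (G : Finset (Finset α)) (e p q f g : Finset α) : Prop where
  e_mem : e ∈ G
  f_mem : f ∈ G
  g_mem : g ∈ G
  p_mem : p ∈ e.powersetCard 2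
  q_mem : q ∈ e.powersetCard 2
  p_ne_q : p ≠ q
  p_subset_f : p ⊆ f
  q_subset_g : q ⊆ g
  f_ne_e : f ≠ e
  g_ne_e : g ≠ e

namespace Fork

variable {G : Finset (Finset α)} {e p q f g : Finset α}

theorem symm (F : Fork G e p q f g) : Fork G e q p g f :=
  ⟨F.e_mem, F.g_mem, F.f_mem, F.q_mem, F.p_mem, F.p_ne_q.symm, F.q_subset_g, F.p_subset_f,
    F.g_ne_e, F.f_ne_e⟩

variable [DecidableEq α]

theorem not_subset_f (F : Fork G e p q f g) (h3 : ∀ e ∈ G, #e = 3) {r : Finset α}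
    (hr : r ∈ e.powersetCard 2) (hrp : r ≠ p) : ¬r ⊆ f := fun hrf =>
  F.f_ne_e (eq_of_two_pairs_subset (h3 e F.e_mem) (h3 f F.f_mem) F.p_mem hr hrp.symm
    F.p_subset_f hrf)

theorem f_ne_g (F : Fork G e p q f g) (h3 : ∀ e ∈ G, #e = 3) : f ≠ g := by
  rintro rfl
  exact F.not_subset_f h3 F.q_mem F.p_ne_q.symm F.q_subset_g

theorem card_union_le (F : Fork G e p q f g) (h3 : ∀ e ∈ G, #e = 3) : #(e ∪ f) ≤ 4 := by
  have := card_union_add_card_le (mem_powersetCard.1 F.p_mem).1 F.p_subset_f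
  rw [h3 e F.e_mem, h3 f F.f_mem, (mem_powersetCard.1 F.p_mem).2] at this
  omega

theorem card_union_union_le (F : Fork G e p q f g) (h3 : ∀ e ∈ G, #e = 3) :
    #(e ∪ f ∪ g) ≤ 5 := by
  have := card_union_add_card_le
    ((mem_powersetCard.1 F.q_mem).1.trans subset_union_left : q ⊆ e ∪ f) F.q_subset_g
  rw [h3 g F.g_mem, (mem_powersetCard.1 F.q_mem).2] at this
  have := F.card_union_le h3
  omega

theorem four_le_card (F : Fork G e p q f g) (h3 : ∀ e ∈ G, #e = 3) : 4 ≤ #(e ∪ f ∪ g) := by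
  have hef : 3 < #(e ∪ f) := by
    by_contra! hle
    have he : e = e ∪ f := eq_of_subset_of_card_le subset_union_left (by rw [h3 e F.e_mem]; omega)
    exact F.f_ne_e (eq_of_subset_of_card_le (subset_union_right.trans he.symm.subset)
      (by rw [h3 e F.e_mem, h3 f F.f_mem]))
  exact hef.trans_le (card_le_card subset_union_left)

theorem eq_or_eq_or_eq (F : Fork G e p q f g) (hG : F64Free G) (h3 : ∀ e ∈ G, #e = 3)
    {h : Finset α} (hh : h ∈ G) (hcard : #(e ∪ f ∪ g) ≤ #(h ∩ (e ∪ f ∪ g)) + 3) :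
    h = e ∨ h = f ∨ h = g := by
  by_contra! hne
  obtain ⟨hhe, hhf, hhg⟩ := hne
  have := hG.card_inter_add_three_lt h3 F.e_mem F.f_mem F.g_mem hh F.f_ne_e.symm F.g_ne_e.symm
    hhe.symm (F.f_ne_g h3) hhf.symm hhg.symm
  omega

theorem eq_or_eq_or_eq_of_pair_subset (F : Fork G e p q f g) (hG : F64Free G)
    (h3 : ∀ e ∈ G, #e = 3) {r h : Finset α} (hr : #r = 2) (hrU : r ⊆ e ∪ f ∪ g) (hh : h ∈ G)
    (hrh : r ⊆ h) : h = e ∨ h = f ∨ h = g :=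
  F.eq_or_eq_or_eq hG h3 hh <| by
    have := card_le_card (subset_inter hrh hrU)
    have := F.card_union_union_le h3
    omega

theorem codeg_eq_two (F : Fork G e p q f g) (hG : F64Free G) (h3 : ∀ e ∈ G, #e = 3) :
    codeg G p = 2 := by
  obtain ⟨hpe, hp⟩ := mem_powersetCard.1 F.p_mem
  have hfilter : {h ∈ G | p ⊆ h} = {e, f} := by
    ext h
    simp only [mem_filter, mem_insert, mem_singleton]
    constructor
    · rintro ⟨hh, hph⟩
      rcases F.eq_or_eq_or_eq_of_pair_subset hG h3 hp
        (hpe.trans (subset_union_left.trans subset_union_left)) hh hph with heq | heq | heq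
      · exact Or.inl heq
      · exact Or.inr heq
      · exact absurd (heq ▸ hph) (F.symm.not_subset_f h3 F.p_mem F.p_ne_q)
    · rintro (rfl | rfl)
      exacts [⟨F.e_mem, hpe⟩, ⟨F.f_mem, F.p_subset_f⟩]
  rw [codeg, hfilter, card_pair F.f_ne_e.symm]

theorem codeg_eq_one (F : Fork G e p q f g) (hG : F64Free G) (h3 : ∀ e ∈ G, #e = 3)
    {r : Finset α} (hr : r ∈ e.powersetCard 2) (hrp : r ≠ p) (hrq : r ≠ q) : codeg G r = 1 := by
  obtain ⟨hre, hr2⟩ := mem_powersetCard.1 hr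
  rw [codeg, card_eq_one]
  refine ⟨e, ext fun h => ?_⟩
  simp only [mem_filter, mem_singleton]
  constructor
  · rintro ⟨hh, hrh⟩
    rcases F.eq_or_eq_or_eq_of_pair_subset hG h3 hr2
      (hre.trans (subset_union_left.trans subset_union_left)) hh hrh with heq | heq | heq
    · exact heq
    · exact absurd (heq ▸ hrh) (F.not_subset_f h3 hr hrp)
    · exact absurd (heq ▸ hrh) (F.symm.not_subset_f h3 hr hrq)
  · rintro rfl
    exact ⟨F.e_mem, hre⟩

theorem hasTwoHeavyPairs (F : Fork G e p q f g) (hG : F64Free G) (h3 : ∀ e ∈ G, #e = 3) :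
    HasTwoHeavyPairs G e :=
  ⟨p, F.p_mem, q, F.q_mem, F.p_ne_q, (F.codeg_eq_two hG h3).ge, (F.symm.codeg_eq_two hG h3).ge⟩

theorem isIsolatedK4Minus (F : Fork G e p q f g) (hG : F64Free G) (h3 : ∀ e ∈ G, #e = 3)
    (hU : #(e ∪ f ∪ g) ≤ 4) : IsIsolatedK4Minus G (e ∪ f ∪ g) := by
  have hU4 : #(e ∪ f ∪ g) = 4 := le_antisymm hU (F.four_le_card h3)
  have hmem : ∀ h ∈ G, (h ∩ (e ∪ f ∪ g)).Nonempty → h = e ∨ h = f ∨ h = g := fun h hh hne =>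
    F.eq_or_eq_or_eq hG h3 hh (by have := hne.card_pos; omega)
  have hsub : ∀ h, h = e ∨ h = f ∨ h = g → h ⊆ e ∪ f ∪ g := by
    rintro h (rfl | rfl | rfl)
    · exact subset_union_left.trans subset_union_left
    · exact subset_union_right.trans subset_union_left
    · exact subset_union_right
  refine ⟨hU4, fun h hh hne => hsub h (hmem h hh hne), ?_⟩
  have hfilter : {h ∈ G | h ⊆ e ∪ f ∪ g} = {e, f, g} := by
    ext h
    simp only [mem_filter, mem_insert, mem_singleton]
    constructor
    · rintro ⟨hh, hhU⟩
      refine hmem h hh ?_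
      rw [inter_eq_left.2 hhU, ← card_pos, h3 h hh]
      norm_num
    · intro hh
      refine ⟨?_, hsub h hh⟩
      rcases hh with rfl | rfl | rfl
      exacts [F.e_mem, F.f_mem, F.g_mem]
  rw [hfilter, card_insert_of_notMem (by simp [F.f_ne_e.symm, F.g_ne_e.symm]),
    card_pair (F.f_ne_g h3)]

theorem not_hasTwoHeavyPairs_f (F : Fork G e p q f g) (hG : F64Free G) (h3 : ∀ e ∈ G, #e = 3)
    (hU : #(e ∪ f ∪ g) = 5) : ¬HasTwoHeavyPairs G f := by
  rintro ⟨r₁, hr₁, r₂, hr₂, hr₁₂, hd₁, hd₂⟩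
  obtain ⟨r, hr, hrp, hdr⟩ : ∃ r ∈ f.powersetCard 2, r ≠ p ∧ 2 ≤ codeg G r := by
    by_cases h : r₁ = p
    · exact ⟨r₂, hr₂, fun h' => hr₁₂ (h.trans h'.symm), hd₂⟩
    · exact ⟨r₁, hr₁, h, hd₁⟩
  obtain ⟨hrf, hr2⟩ := mem_powersetCard.1 hr
  obtain ⟨hpe, hp2⟩ := mem_powersetCard.1 F.p_mem
  obtain ⟨h, hh, hrh, hhf⟩ := exists_ne_of_two_le_codeg hdr f
  rcases F.eq_or_eq_or_eq_of_pair_subset hG h3 hr2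
    (hrf.trans (subset_union_right.trans subset_union_left)) hh hrh with heq | heq | heq
  · rw [heq] at hrh hhf
    exact hhf (eq_of_two_pairs_subset (h3 f F.f_mem) (h3 e F.e_mem)
      (mem_powersetCard.2 ⟨F.p_subset_f, hp2⟩) hr hrp.symm hpe hrh)
  · exact hhf heq
  · -- the edge `g = q ∪ r` would lie inside `e ∪ f`
    rw [heq] at hrh
    have hrq : q ≠ r := by
      rintro rfl
      exact F.not_subset_f h3 F.q_mem F.p_ne_q.symm hrf
    have hg : q ∪ r = g := union_eq_of_mem_powersetCard_two (h3 g F.g_mem)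
      (mem_powersetCard.2 ⟨F.q_subset_g, (mem_powersetCard.1 F.q_mem).2⟩)
      (mem_powersetCard.2 ⟨hrh, hr2⟩) hrq
    have hU' : e ∪ f ∪ g = e ∪ f := union_eq_left.2 (hg ▸ union_subset
      ((mem_powersetCard.1 F.q_mem).1.trans subset_union_left) (hrf.trans subset_union_right))
    have := F.card_union_le h3
    rw [hU'] at hU
    omega

theorem isTransferPair (F : Fork G e p q f g) (hG : F64Free G) (h3 : ∀ e ∈ G, #e = 3)
    (hU : #(e ∪ f ∪ g) = 5) : IsTransferPair G p :=
  ⟨F.codeg_eq_two hG h3, ⟨e, F.e_mem, (mem_powersetCard.1 F.p_mem).1, F.hasTwoHeavyPairs hG h3⟩,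
    f, F.f_mem, F.p_subset_f, F.not_hasTwoHeavyPairs_f hG h3 hU⟩

theorem sum_share_eq (F : Fork G e p q f g) (hG : F64Free G) (h3 : ∀ e ∈ G, #e = 3) :
    ∑ r ∈ e.powersetCard 2, share G r e = share G p e + share G q e + 1 := by
  have hpq : {p, q} ⊆ e.powersetCard 2 := insert_subset F.p_mem (singleton_subset_iff.2 F.q_mem)
  rw [sum_eq_sum_add_card_sdiff hpq, sum_pair F.p_ne_q, card_sdiff_of_subset hpq,
    card_pair F.p_ne_q, card_powersetCard, h3 e F.e_mem]
  · norm_num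
  · intro r hr
    simp only [mem_sdiff, mem_insert, mem_singleton, not_or] at hr
    exact share_eq_one (F.codeg_eq_one hG h3 hr.1 hr.2.1 hr.2.2)

open Classical in
theorem le_sum_share (F : Fork G e p q f g) (hG : F64Free G) (h3 : ∀ e ∈ G, #e = 3) :
    7 / 3 - (if IsInIsolatedK4Minus G e then 1 / 3 else 0) ≤
      ∑ r ∈ e.powersetCard 2, share G r e := by
  rw [F.sum_share_eq hG h3]
  rcases (F.card_union_union_le h3).lt_or_eq with hU | hU
  · rw [if_pos ⟨_, subset_union_left.trans subset_union_left, F.isIsolatedK4Minus hG h3 (by omega)⟩]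
    have := half_le_share (F.codeg_eq_two hG h3) (F.hasTwoHeavyPairs hG h3)
    have := half_le_share (F.symm.codeg_eq_two hG h3) (F.hasTwoHeavyPairs hG h3)
    linarith
  · have hU' : #(e ∪ g ∪ f) = 5 := by rwa [union_right_comm]
    rw [share_of_isTransferPair (F.isTransferPair hG h3 hU) (F.hasTwoHeavyPairs hG h3),
      share_of_isTransferPair (F.symm.isTransferPair hG h3 hU') (F.hasTwoHeavyPairs hG h3)]
    split_ifs <;> norm_num

end Fork

section

variable [DecidableEq α] {G : Finset (Finset α)}

theorem seven_thirds_le_sum_share_of_not_hasTwoHeavyPairs (hG : F64Free G)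
    (h3 : ∀ e ∈ G, #e = 3) {e : Finset α} (he : e ∈ G) (hm : ¬HasTwoHeavyPairs G e) :
    7 / 3 ≤ ∑ r ∈ e.powersetCard 2, share G r e := by
  have hpairs : #(e.powersetCard 2) = 3 := by rw [card_powersetCard, h3 e he]; rfl
  have hlow : ∀ r ∈ e.powersetCard 2, 1 ≤ codeg G r := fun r hr =>
    one_le_codeg he (mem_powersetCard.1 hr).1
  obtain ⟨p, hp, hrest⟩ : ∃ p ∈ e.powersetCard 2, ∀ r ∈ e.powersetCard 2, r ≠ p →
      codeg G r = 1 := by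
    by_cases hheavy : ∃ p ∈ e.powersetCard 2, 2 ≤ codeg G p
    · obtain ⟨p, hp, hdp⟩ := hheavy
      refine ⟨p, hp, fun r hr hrp => ?_⟩
      have := hlow r hr
      by_contra
      exact hm ⟨r, hr, p, hp, hrp, by omega, hdp⟩
    · push Not at hheavy
      obtain ⟨p, hp⟩ := card_pos.1 (by omega : 0 < #(e.powersetCard 2))
      exact ⟨p, hp, fun r hr _ => by have := hlow r hr; have := hheavy r hr; omega⟩
  have hsub : {p} ⊆ e.powersetCard 2 := singleton_subset_iff.2 hp
  rw [sum_eq_sum_add_card_sdiff hsub, sum_singleton, card_sdiff_of_subset hsub, hpairs,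
    card_singleton]
  · have := third_le_share (e := e) (hlow p hp) (hG.codeg_le_three h3 (mem_powersetCard.1 hp).2)
    push_cast
    linarith
  · intro r hr
    rw [mem_sdiff, mem_singleton] at hr
    exact share_eq_one (hrest r hr.1 hr.2)

open Classical in
theorem le_sum_share (hG : F64Free G) (h3 : ∀ e ∈ G, #e = 3) {e : Finset α} (he : e ∈ G) :
    7 / 3 - (if IsInIsolatedK4Minus G e then 1 / 3 else 0) ≤
      ∑ r ∈ e.powersetCard 2, share G r e := by
  by_cases hm : HasTwoHeavyPairs G e
  · obtain ⟨p, hp, q, hq, hpq, hdp, hdq⟩ := hm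
    obtain ⟨f, hf, hpf, hfe⟩ := exists_ne_of_two_le_codeg hdp e
    obtain ⟨g, hg, hqg, hge⟩ := exists_ne_of_two_le_codeg hdq e
    exact Fork.le_sum_share ⟨he, hf, hg, hp, hq, hpq, hpf, hqg, hfe, hge⟩ hG h3
  · have := seven_thirds_le_sum_share_of_not_hasTwoHeavyPairs hG h3 he hm
    split_ifs <;> linarith

open Classical in
theorem seven_mul_card_sub_le [Fintype α] (hG : F64Free G) (h3 : ∀ e ∈ G, #e = 3) :
    7 * (#G : ℝ) - #{e ∈ G | IsInIsolatedK4Minus G e} ≤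
      3 * (Fintype.card α).choose 2 := by
  have hlower := sum_le_sum fun e (he : e ∈ G) => le_sum_share hG h3 he
  have hupper := sum_sum_powersetCard_le_choose G 2 (share G) (sum_share_le_one G)
  rw [sum_sub_distrib, ← sum_filter, sum_const, sum_const, nsmul_eq_mul, nsmul_eq_mul] at hlower
  linarith

end

end TripleSystem

/-- Any `F⁽³⁾(6,4)`-free 3-uniform hypergraph on `n` vertices has at most `(3/14)n²`
edges. -/
theorem stmt_14 (n : ℕ) (G : Finset (Finset (Fin n)))
    (h3 : ∀ e ∈ G, e.card = 3)
    (hfree64 : ∀ e₁ ∈ G, ∀ e₂ ∈ G, ∀ e₃ ∈ G, ∀ e₄ ∈ G,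
      e₁ ≠ e₂ → e₁ ≠ e₃ → e₁ ≠ e₄ → e₂ ≠ e₃ → e₂ ≠ e₄ → e₃ ≠ e₄ →
        6 < (e₁ ∪ e₂ ∪ e₃ ∪ e₄).card) :
    (G.card : ℝ) ≤ 3 / 14 * (n : ℝ) ^ 2 := by
  have hcount := TripleSystem.seven_mul_card_sub_le hfree64 h3
  have hK4 := TripleSystem.four_mul_card_filter_isInIsolatedK4Minus_le h3
  rw [Fintype.card_fin, Nat.cast_choose_two] at hcount
  rw [Fintype.card_fin] at hK4
  have hK4' := (Nat.cast_le (α := ℝ)).2 hK4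
  push_cast at hK4'
  nlinarith
end

section
/- Let G be a 3-uniform hypergraph that contains no 3 edges spanning at most 5 vertices and no 4 edges spanning at most 6 vertices. For each pair xy of codegree 2, with the two edges through xy being xyz and xyz′, the pair zz′ has codegree 0, and the map sending xy to zz′ is injective from pairs of codegree 2 to pairs of codegree 0. -/
private lemma edge_struct {V : Type} [DecidableEq V] {e p : Finset V}
    (he : e.card = 3) (hp : p.card = 2) (hpe : p ⊆ e) :
    ∃ z, z ∉ p ∧ e = insert z p := by
  have h1 : (e \ p).card = 1 := by rw [Finset.card_sdiff_of_subset hpe, he, hp]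
  obtain ⟨z, hz⟩ := Finset.card_eq_one.mp h1
  have hzm : z ∈ e \ p := by rw [hz]; exact Finset.mem_singleton_self z
  refine ⟨z, (Finset.mem_sdiff.mp hzm).2, ?_⟩
  have h2 := Finset.union_sdiff_of_subset hpe
  rw [hz] at h2
  rw [← h2]; ext a; simp [or_comm]

private lemma pairdata {V : Type} [DecidableEq V] (G : Finset (Finset V))
    (h3 : ∀ e ∈ G, e.card = 3) (p : Finset V) (hp : p.card = 2)
    (hcnt : (G.filter (fun e => p ⊆ e)).card = 2) :
    ∃ e₁ e₂ z₁ z₂, e₁ ∈ G ∧ e₂ ∈ G ∧ e₁ ≠ e₂ ∧ p ⊆ e₁ ∧ p ⊆ e₂ ∧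
      z₁ ∉ p ∧ z₂ ∉ p ∧ z₁ ≠ z₂ ∧ e₁ = insert z₁ p ∧ e₂ = insert z₂ p ∧
      (G.filter (fun e => p ⊆ e)).biUnion id \ p = {z₁, z₂} := by
  obtain ⟨e₁, e₂, hne, hf⟩ := Finset.card_eq_two.mp hcnt
  have hm₁ : e₁ ∈ G.filter (fun e => p ⊆ e) := by rw [hf]; simp
  have hm₂ : e₂ ∈ G.filter (fun e => p ⊆ e) := by rw [hf]; simp
  rw [Finset.mem_filter] at hm₁ hm₂
  obtain ⟨z₁, hz₁p, hz₁e⟩ := edge_struct (h3 e₁ hm₁.1) hp hm₁.2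
  obtain ⟨z₂, hz₂p, hz₂e⟩ := edge_struct (h3 e₂ hm₂.1) hp hm₂.2
  have hzz : z₁ ≠ z₂ := by
    intro h; apply hne; rw [hz₁e, hz₂e, h]
  refine ⟨e₁, e₂, z₁, z₂, hm₁.1, hm₂.1, hne, hm₁.2, hm₂.2, hz₁p, hz₂p, hzz,
    hz₁e, hz₂e, ?_⟩
  rw [hf]
  ext a
  simp only [Finset.mem_sdiff, Finset.mem_biUnion, Finset.mem_insert,
    Finset.mem_singleton, id_eq]
  constructor
  · rintro ⟨⟨e, (rfl | rfl), ha⟩, hap⟩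
    · rw [hz₁e] at ha; rcases Finset.mem_insert.mp ha with h | h
      · exact Or.inl h
      · exact absurd h hap
    · rw [hz₂e] at ha; rcases Finset.mem_insert.mp ha with h | h
      · exact Or.inr h
      · exact absurd h hap
  · rintro (rfl | rfl)
    · exact ⟨⟨e₁, Or.inl rfl, by rw [hz₁e]; exact Finset.mem_insert_self _ _⟩, hz₁p⟩
    · exact ⟨⟨e₂, Or.inr rfl, by rw [hz₂e]; exact Finset.mem_insert_self _ _⟩, hz₂p⟩

private lemma aux_coincide {V : Type} [DecidableEq V] (G : Finset (Finset V))
    (hfree53 : ∀ e₁ ∈ G, ∀ e₂ ∈ G, ∀ e₃ ∈ G,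
      e₁ ≠ e₂ → e₁ ≠ e₃ → e₂ ≠ e₃ → 5 < (e₁ ∪ e₂ ∪ e₃).card)
    {p q D e₁ e₂ f₂ : Finset V}
    (he₁ : e₁ ∈ G) (he₂ : e₂ ∈ G) (hf₂ : f₂ ∈ G)
    (hc₁ : e₁.card = 3) (hc₂ : e₂.card = 3)
    (hp : p.card = 2) (hq : q.card = 2)
    (hpe₁ : p ⊆ e₁) (hpe₂ : p ⊆ e₂) (hqe₁ : q ⊆ e₁) (hqf₂ : q ⊆ f₂)
    (hsub₂ : e₂ ⊆ e₁ ∪ D) (hsubf : f₂ ⊆ e₁ ∪ D)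
    (hD : D.card = 2) (h12 : e₁ ≠ e₂) (h1f : e₁ ≠ f₂) : p = q := by
  by_cases h2f : e₂ = f₂
  · subst h2f
    have hi1 : e₁ ∩ e₂ ⊆ e₁ := Finset.inter_subset_left
    have hilt : (e₁ ∩ e₂).card ≤ 2 := by
      by_contra h
      push_neg at h
      have : (e₁ ∩ e₂).card = 3 := le_antisymm (hc₁ ▸ Finset.card_le_card hi1) h
      have heq : e₁ ∩ e₂ = e₁ := Finset.eq_of_subset_of_card_le hi1 (by omega)
      apply h12
      apply Finset.eq_of_subset_of_card_le _ (by omega)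
      rw [← heq]; exact Finset.inter_subset_right
    have hpi : p ⊆ e₁ ∩ e₂ := Finset.subset_inter hpe₁ hpe₂
    have hqi : q ⊆ e₁ ∩ e₂ := Finset.subset_inter hqe₁ hqf₂
    have hp' : p = e₁ ∩ e₂ := Finset.eq_of_subset_of_card_le hpi (by omega)
    have hq' : q = e₁ ∩ e₂ := Finset.eq_of_subset_of_card_le hqi (by omega)
    rw [hp', hq']
  · exfalso
    have h5 := hfree53 e₁ he₁ e₂ he₂ f₂ hf₂ h12 h1f h2f
    have hsub : e₁ ∪ e₂ ∪ f₂ ⊆ e₁ ∪ D := by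
      intro a ha
      rcases Finset.mem_union.mp ha with h | h
      · rcases Finset.mem_union.mp h with h | h
        · exact Finset.mem_union_left _ h
        · exact hsub₂ h
      · exact hsubf h
    have := Finset.card_le_card hsub
    have := Finset.card_union_le e₁ D
    omega

/-- In an `F⁽³⁾(5,3)`-free and `F⁽³⁾(6,4)`-free 3-uniform hypergraph, the map sending a
pair `xy` of codegree 2 (with edges `xyz`, `xyz'` through it) to the pair `zz'` lands in
pairs of codegree 0 and is injective. Here the image of `p` is `(⋃ {e ∈ G | p ⊆ e}) \ p`. -/
theorem stmt_15 {V : Type} [Fintype V] [DecidableEq V] (G : Finset (Finset V))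
    (h3 : ∀ e ∈ G, e.card = 3)
    (hfree53 : ∀ e₁ ∈ G, ∀ e₂ ∈ G, ∀ e₃ ∈ G,
      e₁ ≠ e₂ → e₁ ≠ e₃ → e₂ ≠ e₃ → 5 < (e₁ ∪ e₂ ∪ e₃).card)
    (hfree64 : ∀ e₁ ∈ G, ∀ e₂ ∈ G, ∀ e₃ ∈ G, ∀ e₄ ∈ G,
      e₁ ≠ e₂ → e₁ ≠ e₃ → e₁ ≠ e₄ → e₂ ≠ e₃ → e₂ ≠ e₄ → e₃ ≠ e₄ →
        6 < (e₁ ∪ e₂ ∪ e₃ ∪ e₄).card) :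
    (∀ p : Finset V, p.card = 2 → (G.filter (fun e => p ⊆ e)).card = 2 →
      (((G.filter (fun e => p ⊆ e)).biUnion id \ p).card = 2 ∧
        (G.filter (fun e => ((G.filter (fun e' => p ⊆ e')).biUnion id \ p) ⊆ e)).card
          = 0)) ∧
    (∀ p q : Finset V, p.card = 2 → q.card = 2 →
      (G.filter (fun e => p ⊆ e)).card = 2 → (G.filter (fun e => q ⊆ e)).card = 2 →
      (G.filter (fun e => p ⊆ e)).biUnion id \ p =
        (G.filter (fun e => q ⊆ e)).biUnion id \ q → p = q) := by
  constructor
  · intro p hp hcnt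
    obtain ⟨e₁, e₂, z₁, z₂, he₁, he₂, hne, hpe₁, hpe₂, hz₁p, hz₂p, hzz, hz₁e, hz₂e, hD⟩ :=
      pairdata G h3 p hp hcnt
    constructor
    · rw [hD]; exact Finset.card_pair hzz
    · rw [Finset.card_eq_zero, Finset.filter_eq_empty_iff]
      intro e₃ he₃ hsub
      rw [hD] at hsub
      obtain ⟨w, hwz, hwe⟩ := edge_struct (h3 e₃ he₃) (Finset.card_pair hzz) hsub
      have h13 : e₁ ≠ e₃ := by
        intro h
        have : z₂ ∈ e₁ := by
          rw [h, hwe]; exact Finset.mem_insert_of_mem (by simp)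
        rw [hz₁e] at this
        rcases Finset.mem_insert.mp this with h' | h'
        · exact hzz h'.symm
        · exact hz₂p h'
      have h23 : e₂ ≠ e₃ := by
        intro h
        have : z₁ ∈ e₂ := by
          rw [h, hwe]; exact Finset.mem_insert_of_mem (by simp)
        rw [hz₂e] at this
        rcases Finset.mem_insert.mp this with h' | h'
        · exact hzz h'
        · exact hz₁p h'
      have h5 := hfree53 e₁ he₁ e₂ he₂ e₃ he₃ hne h13 h23
      have hsub' : e₁ ∪ e₂ ∪ e₃ ⊆ insert w (insert z₁ (insert z₂ p)) := by
        intro a ha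
        rcases Finset.mem_union.mp ha with h | h
        · rcases Finset.mem_union.mp h with h | h
          · rw [hz₁e] at h
            rcases Finset.mem_insert.mp h with h' | h' <;> simp [h']
          · rw [hz₂e] at h
            rcases Finset.mem_insert.mp h with h' | h' <;> simp [h']
        · rw [hwe] at h
          rcases Finset.mem_insert.mp h with h' | h'
          · simp [h']
          · rcases Finset.mem_insert.mp h' with h'' | h''
            · simp [h'']
            · simp [Finset.mem_singleton.mp h'']
      have hle := Finset.card_le_card hsub'
      have i1 := Finset.card_insert_le w (insert z₁ (insert z₂ p))
      have i2 := Finset.card_insert_le z₁ (insert z₂ p)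
      have i3 := Finset.card_insert_le z₂ p
      omega
  · intro p q hp hq hcp hcq himg
    obtain ⟨e₁, e₂, z₁, z₂, he₁, he₂, hne, hpe₁, hpe₂, hz₁p, hz₂p, hzz, hz₁e, hz₂e, hDp⟩ :=
      pairdata G h3 p hp hcp
    obtain ⟨f₁, f₂, w₁, w₂, hf₁, hf₂, hnf, hqf₁, hqf₂, hw₁q, hw₂q, hww, hw₁e, hw₂e, hDq⟩ :=
      pairdata G h3 q hq hcq
    set D : Finset V := ({z₁, z₂} : Finset V) with hDdef
    have hDcard : D.card = 2 := Finset.card_pair hzz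
    have hDq' : ({w₁, w₂} : Finset V) = D := by rw [← hDq, ← himg, hDp]
    have hsube₁ : e₁ ⊆ p ∪ D := by
      rw [hz₁e]; intro a ha
      rcases Finset.mem_insert.mp ha with h | h
      · exact Finset.mem_union_right _ (by rw [h, hDdef]; simp)
      · exact Finset.mem_union_left _ h
    have hsube₂ : e₂ ⊆ p ∪ D := by
      rw [hz₂e]; intro a ha
      rcases Finset.mem_insert.mp ha with h | h
      · exact Finset.mem_union_right _ (by rw [h, hDdef]; simp)
      · exact Finset.mem_union_left _ h
    have hsubf₁ : f₁ ⊆ q ∪ D := by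
      rw [hw₁e]; intro a ha
      rcases Finset.mem_insert.mp ha with h | h
      · exact Finset.mem_union_right _ (by rw [h, ← hDq']; simp)
      · exact Finset.mem_union_left _ h
    have hsubf₂ : f₂ ⊆ q ∪ D := by
      rw [hw₂e]; intro a ha
      rcases Finset.mem_insert.mp ha with h | h
      · exact Finset.mem_union_right _ (by rw [h, ← hDq']; simp)
      · exact Finset.mem_union_left _ h
    by_cases h11 : e₁ = f₁
    · exact aux_coincide G hfree53 he₁ he₂ hf₂ (h3 e₁ he₁) (h3 e₂ he₂) hp hq
        hpe₁ hpe₂ (h11 ▸ hqf₁) hqf₂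
        (hsube₂.trans (Finset.union_subset_union_left hpe₁))
        (hsubf₂.trans (Finset.union_subset_union_left (h11 ▸ hqf₁)))
        hDcard hne (h11 ▸ hnf)
    by_cases h12 : e₁ = f₂
    · exact aux_coincide G hfree53 he₁ he₂ hf₁ (h3 e₁ he₁) (h3 e₂ he₂) hp hq
        hpe₁ hpe₂ (h12 ▸ hqf₂) hqf₁
        (hsube₂.trans (Finset.union_subset_union_left hpe₁))
        (hsubf₁.trans (Finset.union_subset_union_left (h12 ▸ hqf₂)))
        hDcard hne (by rw [h12]; exact fun h => hnf h.symm)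
    by_cases h21 : e₂ = f₁
    · exact aux_coincide G hfree53 he₂ he₁ hf₂ (h3 e₂ he₂) (h3 e₁ he₁) hp hq
        hpe₂ hpe₁ (h21 ▸ hqf₁) hqf₂
        (hsube₁.trans (Finset.union_subset_union_left hpe₂))
        (hsubf₂.trans (Finset.union_subset_union_left (h21 ▸ hqf₁)))
        hDcard hne.symm (h21 ▸ hnf)
    by_cases h22 : e₂ = f₂
    · exact aux_coincide G hfree53 he₂ he₁ hf₁ (h3 e₂ he₂) (h3 e₁ he₁) hp hq
        hpe₂ hpe₁ (h22 ▸ hqf₂) hqf₁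
        (hsube₁.trans (Finset.union_subset_union_left hpe₂))
        (hsubf₁.trans (Finset.union_subset_union_left (h22 ▸ hqf₂)))
        hDcard hne.symm (by rw [h22]; exact fun h => hnf h.symm)
    exfalso
    have h6 := hfree64 e₁ he₁ e₂ he₂ f₁ hf₁ f₂ hf₂ hne h11 h12 h21 h22 hnf
    have hsub : e₁ ∪ e₂ ∪ f₁ ∪ f₂ ⊆ p ∪ q ∪ D := by
      intro a ha
      have hpD : p ∪ D ⊆ p ∪ q ∪ D := by
        intro b hb
        rcases Finset.mem_union.mp hb with h | h
        · exact Finset.mem_union_left _ (Finset.mem_union_left _ h)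
        · exact Finset.mem_union_right _ h
      have hqD : q ∪ D ⊆ p ∪ q ∪ D := by
        intro b hb
        rcases Finset.mem_union.mp hb with h | h
        · exact Finset.mem_union_left _ (Finset.mem_union_right _ h)
        · exact Finset.mem_union_right _ h
      rcases Finset.mem_union.mp ha with h | h
      · rcases Finset.mem_union.mp h with h | h
        · rcases Finset.mem_union.mp h with h | h
          · exact hpD (hsube₁ h)
          · exact hpD (hsube₂ h)
        · exact hqD (hsubf₁ h)
      · exact hqD (hsubf₂ h)
    have hle := Finset.card_le_card hsub
    have u1 := Finset.card_union_le (p ∪ q) D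
    have u2 := Finset.card_union_le p q
    omega
end

section
/- Every 3-uniform hypergraph on n vertices that contains no 3 edges spanning at most 5 vertices and no 4 edges spanning at most 6 vertices has at most C(n,2)/3 edges. -/
/-- Any 3-uniform hypergraph on `n` vertices that is both `F⁽³⁾(5,3)`-free and
`F⁽³⁾(6,4)`-free has at most `C(n,2)/3` edges. -/
theorem stmt_16 (n : ℕ) (G : Finset (Finset (Fin n)))
    (h3 : ∀ e ∈ G, e.card = 3)
    (hfree53 : ∀ e₁ ∈ G, ∀ e₂ ∈ G, ∀ e₃ ∈ G,
      e₁ ≠ e₂ → e₁ ≠ e₃ → e₂ ≠ e₃ → 5 < (e₁ ∪ e₂ ∪ e₃).card)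
    (hfree64 : ∀ e₁ ∈ G, ∀ e₂ ∈ G, ∀ e₃ ∈ G, ∀ e₄ ∈ G,
      e₁ ≠ e₂ → e₁ ≠ e₃ → e₁ ≠ e₄ → e₂ ≠ e₃ → e₂ ≠ e₄ → e₃ ≠ e₄ →
        6 < (e₁ ∪ e₂ ∪ e₃ ∪ e₄).card) :
    3 * G.card ≤ n.choose 2 := by
  classical
  set P : Finset (Finset (Fin n)) := (Finset.univ : Finset (Fin n)).powersetCard 2 with hPdef
  set d : Finset (Fin n) → ℕ := fun p => (G.filter (fun e => p ⊆ e)).card with hddef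
  set f : Finset (Fin n) → Finset (Fin n) :=
    fun p => ((G.filter (fun e => p ⊆ e)).sup id) \ p with hfdef
  have L3 : ∀ e₁ ∈ G, ∀ e₂ ∈ G, ∀ e₃ ∈ G, e₁ ≠ e₂ → e₁ ≠ e₃ → e₂ ≠ e₃ →
      (e₁ ∪ e₂ ∪ e₃).card ≤ 5 → False := by
    intro a ha b hb c hc hab hac hbc hle
    exact absurd hle (not_le.mpr (hfree53 a ha b hb c hc hab hac hbc))
  have hPcard : P.card = n.choose 2 := by
    simp [hPdef, Finset.card_powersetCard]
  -- The double counting identity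
  have hsum : ∑ p ∈ P, d p = 3 * G.card := by
    calc ∑ p ∈ P, d p = ∑ p ∈ P, ∑ e ∈ G, if p ⊆ e then 1 else 0 := by
          refine Finset.sum_congr rfl fun p _ => ?_
          exact Finset.card_filter _ _
      _ = ∑ e ∈ G, ∑ p ∈ P, if p ⊆ e then 1 else 0 := Finset.sum_comm
      _ = ∑ e ∈ G, (P.filter (fun p => p ⊆ e)).card := by
          refine Finset.sum_congr rfl fun e _ => ?_
          rw [Finset.card_filter]
      _ = ∑ e ∈ G, 3 := by
          refine Finset.sum_congr rfl fun e he => ?_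
          have hfe : P.filter (fun p => p ⊆ e) = e.powersetCard 2 := by
            ext p
            simp only [hPdef, Finset.mem_filter, Finset.mem_powersetCard,
              Finset.subset_univ, true_and]
            tauto
          rw [hfe, Finset.card_powersetCard, h3 e he]
          decide
      _ = 3 * G.card := by rw [Finset.sum_const, smul_eq_mul, mul_comm]
  -- codegree at most 2
  have hdle : ∀ p ∈ P, d p ≤ 2 := by
    intro p hp
    by_contra hcon
    have h2 : 2 < (G.filter (fun e => p ⊆ e)).card := by
      have : d p = (G.filter (fun e => p ⊆ e)).card := rfl
      omega
    obtain ⟨a, b, c, ha, hb, hc, hab, hac, hbc⟩ := Finset.two_lt_card_iff.mp h2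
    rw [Finset.mem_filter] at ha hb hc
    have hpc : p.card = 2 := (Finset.mem_powersetCard.mp hp).2
    have hbp : (b \ p).card = 1 := by
      rw [Finset.card_sdiff_of_subset hb.2, h3 b hb.1, hpc]
    have hcp : (c \ p).card = 1 := by
      rw [Finset.card_sdiff_of_subset hc.2, h3 c hc.1, hpc]
    have hsub : a ∪ b ∪ c ⊆ a ∪ (b \ p) ∪ (c \ p) := by
      intro x hx
      simp only [Finset.mem_union, Finset.mem_sdiff] at hx ⊢
      by_cases hxp : x ∈ p
      · exact Or.inl (Or.inl (ha.2 hxp))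
      · tauto
    refine L3 a ha.1 b hb.1 c hc.1 hab hac hbc ?_
    calc (a ∪ b ∪ c).card ≤ (a ∪ (b \ p) ∪ (c \ p)).card := Finset.card_le_card hsub
      _ ≤ (a ∪ (b \ p)).card + (c \ p).card := Finset.card_union_le _ _
      _ ≤ a.card + (b \ p).card + (c \ p).card := by
          have := Finset.card_union_le a (b \ p); omega
      _ ≤ 5 := by rw [h3 a ha.1, hbp, hcp]
  -- structure of codegree 2 pairs
  have key : ∀ p ∈ P, d p = 2 → ∃ e1 e2,
      e1 ∈ G ∧ e2 ∈ G ∧ e1 ≠ e2 ∧ p ⊆ e1 ∧ p ⊆ e2 ∧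
      f p = (e1 ∪ e2) \ p ∧ p ∪ f p = e1 ∪ e2 ∧ (f p).card = 2 ∧
      (e1 ∪ e2).card = 4 ∧ (∀ e ∈ G, p ⊆ e → e = e1 ∨ e = e2) := by
    intro p hp hd
    have hpc : p.card = 2 := (Finset.mem_powersetCard.mp hp).2
    have hd' : (G.filter (fun e => p ⊆ e)).card = 2 := hd
    obtain ⟨e1, e2, hne, hset⟩ := Finset.card_eq_two.mp hd'
    have h1 : e1 ∈ G ∧ p ⊆ e1 := by
      have : e1 ∈ G.filter (fun e => p ⊆ e) := by rw [hset]; simp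
      exact Finset.mem_filter.mp this
    have h2 : e2 ∈ G ∧ p ⊆ e2 := by
      have : e2 ∈ G.filter (fun e => p ⊆ e) := by rw [hset]; simp
      exact Finset.mem_filter.mp this
    have hc1 : e1.card = 3 := h3 e1 h1.1
    have hc2 : e2.card = 3 := h3 e2 h2.1
    have hnsub : ¬ e2 ⊆ e1 := fun hs =>
      hne (Finset.eq_of_subset_of_card_le hs (by omega)).symm
    obtain ⟨b, hb2, hb1⟩ := Finset.not_subset.mp hnsub
    have hsd : (e2 \ e1).card = 1 := by
      refine le_antisymm ?_ ?_
      · calc (e2 \ e1).card ≤ (e2 \ p).card :=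
              Finset.card_le_card (Finset.sdiff_subset_sdiff le_rfl h1.2)
          _ = 1 := by rw [Finset.card_sdiff_of_subset h2.2, hc2, hpc]
      · exact Finset.card_pos.mpr ⟨b, Finset.mem_sdiff.mpr ⟨hb2, hb1⟩⟩
    have hU4 : (e1 ∪ e2).card = 4 := by
      have := Finset.card_sdiff_add_card e2 e1
      rw [Finset.union_comm e2 e1] at this
      omega
    have hpU : p ⊆ e1 ∪ e2 := h1.2.trans Finset.subset_union_left
    have hfp : f p = (e1 ∪ e2) \ p := by
      rw [hfdef]
      simp only [hset, Finset.sup_insert, Finset.sup_singleton, id]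
      rfl
    refine ⟨e1, e2, h1.1, h2.1, hne, h1.2, h2.2, hfp, ?_, ?_, hU4, ?_⟩
    · rw [hfp, Finset.union_sdiff_of_subset hpU]
    · rw [hfp, Finset.card_sdiff_of_subset hpU, hU4, hpc]
    · intro e he hpe
      have : e ∈ G.filter (fun e => p ⊆ e) := Finset.mem_filter.mpr ⟨he, hpe⟩
      rw [hset] at this
      simpa using this
  -- the map sends codegree 2 pairs to codegree 0 pairs
  have hmaps : ∀ p ∈ P.filter (fun p => d p = 2), f p ∈ P.filter (fun p => d p = 0) := by
    intro p hp'
    obtain ⟨hp, hdp⟩ := Finset.mem_filter.mp hp'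
    obtain ⟨e1, e2, he1, he2, hne, hpe1, hpe2, hfp, hup, hfc, hU4, hall⟩ := key p hp hdp
    refine Finset.mem_filter.mpr ⟨Finset.mem_powersetCard.mpr ⟨Finset.subset_univ _, hfc⟩, ?_⟩
    have : G.filter (fun e => f p ⊆ e) = ∅ := by
      rw [Finset.filter_eq_empty_iff]
      intro e he hsub
      have hc1 : e1.card = 3 := h3 e1 he1
      have hc2 : e2.card = 3 := h3 e2 he2
      obtain ⟨b, hb2, hb1⟩ := Finset.not_subset.mp
        (show ¬ e2 ⊆ e1 from fun hs => hne (Finset.eq_of_subset_of_card_le hs (by omega)).symm)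
      obtain ⟨a, ha1, ha2⟩ := Finset.not_subset.mp
        (show ¬ e1 ⊆ e2 from fun hs => hne (Finset.eq_of_subset_of_card_le hs (by omega)))
      have hbfp : b ∈ f p := by
        rw [hfp]
        exact Finset.mem_sdiff.mpr ⟨Finset.mem_union_right _ hb2, fun h => hb1 (hpe1 h)⟩
      have hafp : a ∈ f p := by
        rw [hfp]
        exact Finset.mem_sdiff.mpr ⟨Finset.mem_union_left _ ha1, fun h => ha2 (hpe2 h)⟩
      have hne1 : e ≠ e1 := fun h => hb1 (h ▸ hsub hbfp)
      have hne2 : e ≠ e2 := fun h => ha2 (h ▸ hsub hafp)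
      refine L3 e1 he1 e2 he2 e he hne hne1.symm hne2.symm ?_
      have hfpsub : f p ⊆ e1 ∪ e2 := by rw [hfp]; exact Finset.sdiff_subset
      have hsubU : e1 ∪ e2 ∪ e ⊆ (e1 ∪ e2) ∪ (e \ f p) := by
        intro x hx
        simp only [Finset.mem_union, Finset.mem_sdiff] at hx ⊢
        by_cases hxf : x ∈ f p
        · rcases Finset.mem_union.mp (hfpsub hxf) with h | h <;> tauto
        · tauto
      have hefp : (e \ f p).card = 1 := by
        rw [Finset.card_sdiff_of_subset hsub, h3 e he, hfc]
      calc (e1 ∪ e2 ∪ e).card ≤ ((e1 ∪ e2) ∪ (e \ f p)).card := Finset.card_le_card hsubU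
        _ ≤ (e1 ∪ e2).card + (e \ f p).card := Finset.card_union_le _ _
        _ ≤ 5 := by omega
    simp only [hddef, this, Finset.card_empty]
  -- injectivity
  have hinj : Set.InjOn f ↑(P.filter (fun p => d p = 2)) := by
    intro p hp' q hq' hfeq
    simp only [Finset.coe_filter, Set.mem_setOf_eq] at hp' hq'
    obtain ⟨hp, hdp⟩ := hp'
    obtain ⟨hq, hdq⟩ := hq'
    obtain ⟨e1, e2, he1, he2, hne, hpe1, hpe2, hfp, hup, hfc, hU4, hall⟩ := key p hp hdp
    obtain ⟨f1, f2, hf1, hf2, hnf, hqf1, hqf2, hfq, huq, hfcq, hU4q, hallq⟩ := key q hq hdq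
    by_contra hpq
    have hpc : p.card = 2 := (Finset.mem_powersetCard.mp hp).2
    have hqc : q.card = 2 := (Finset.mem_powersetCard.mp hq).2
    have hpU : p ⊆ e1 ∪ e2 := hpe1.trans Finset.subset_union_left
    have hqU : q ⊆ f1 ∪ f2 := hqf1.trans Finset.subset_union_left
    have hrecp : p = (e1 ∪ e2) \ f p := by
      rw [hfp, Finset.sdiff_sdiff_self_left, Finset.inter_eq_right.mpr hpU]
    have hrecq : q = (f1 ∪ f2) \ f q := by
      rw [hfq, Finset.sdiff_sdiff_self_left, Finset.inter_eq_right.mpr hqU]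
    have hUne : e1 ∪ e2 ≠ f1 ∪ f2 := by
      intro hU
      exact hpq (by rw [hrecp, hrecq, hU, hfeq])
    -- if one edge is shared, three edges live in 5 vertices
    have shared : ∀ g a b, g ∈ G → a ∈ G → b ∈ G → g ≠ a → g ≠ b → a ≠ b →
        p ⊆ g → q ⊆ g → a ⊆ e1 ∪ e2 → b ⊆ f1 ∪ f2 → False := by
      intro g a b hg ha hb hga hgb hab hpg hqg haU hbU
      refine L3 g hg a ha b hb hga hgb hab ?_
      have hsub : g ∪ a ∪ b ⊆ g ∪ f p := by
        intro x hx
        simp only [Finset.mem_union] at hx ⊢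
        rcases hx with (hx | hx) | hx
        · exact Or.inl hx
        · have : x ∈ p ∪ f p := hup ▸ haU hx
          rcases Finset.mem_union.mp this with h | h
          · exact Or.inl (hpg h)
          · exact Or.inr h
        · have : x ∈ q ∪ f q := huq ▸ hbU hx
          rcases Finset.mem_union.mp this with h | h
          · exact Or.inl (hqg h)
          · exact Or.inr (hfeq ▸ h)
      calc (g ∪ a ∪ b).card ≤ (g ∪ f p).card := Finset.card_le_card hsub
        _ ≤ g.card + (f p).card := Finset.card_union_le _ _
        _ ≤ 5 := by rw [h3 g hg, hfc]
    by_cases h11 : e1 = f1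
    · refine shared e1 e2 f2 he1 he2 hf2 hne (h11 ▸ hnf) ?_ hpe1 (h11 ▸ hqf1)
        Finset.subset_union_right Finset.subset_union_right
      intro h; exact hUne (by rw [h11, h])
    by_cases h12 : e1 = f2
    · refine shared e1 e2 f1 he1 he2 hf1 hne (fun h => hnf (h ▸ h12 ▸ rfl)) ?_ hpe1
        (h12 ▸ hqf2) Finset.subset_union_right Finset.subset_union_left
      intro h; exact hUne (by rw [h12, h, Finset.union_comm])
    by_cases h21 : e2 = f1
    · refine shared e2 e1 f2 he2 he1 hf2 hne.symm (h21 ▸ hnf) ?_ hpe2 (h21 ▸ hqf1)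
        Finset.subset_union_left Finset.subset_union_right
      intro h; exact hUne (by rw [h21, h, Finset.union_comm f2])
    by_cases h22 : e2 = f2
    · refine shared e2 e1 f1 he2 he1 hf1 hne.symm (fun h => hnf (h ▸ h22 ▸ rfl)) ?_ hpe2
        (h22 ▸ hqf2) Finset.subset_union_left Finset.subset_union_left
      intro h; exact hUne (by rw [h22, h])
    -- all four edges are distinct: they live in 6 vertices
    have h6 := hfree64 e1 he1 e2 he2 f1 hf1 f2 hf2 hne h11 h12 h21 h22 hnf
    have hsub : e1 ∪ e2 ∪ f1 ∪ f2 ⊆ p ∪ q ∪ f p := by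
      intro x hx
      simp only [Finset.mem_union] at hx ⊢
      rcases hx with ((hx | hx) | hx) | hx
      · have : x ∈ p ∪ f p := hup ▸ Finset.mem_union_left _ hx
        rcases Finset.mem_union.mp this with h | h
        · tauto
        · tauto
      · have : x ∈ p ∪ f p := hup ▸ Finset.mem_union_right _ hx
        rcases Finset.mem_union.mp this with h | h
        · tauto
        · tauto
      · have : x ∈ q ∪ f q := huq ▸ Finset.mem_union_left _ hx
        rcases Finset.mem_union.mp this with h | h
        · tauto
        · rw [← hfeq] at h; tauto
      · have : x ∈ q ∪ f q := huq ▸ Finset.mem_union_right _ hx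
        rcases Finset.mem_union.mp this with h | h
        · tauto
        · rw [← hfeq] at h; tauto
    have : (e1 ∪ e2 ∪ f1 ∪ f2).card ≤ 6 := by
      calc (e1 ∪ e2 ∪ f1 ∪ f2).card ≤ (p ∪ q ∪ f p).card := Finset.card_le_card hsub
        _ ≤ (p ∪ q).card + (f p).card := Finset.card_union_le _ _
        _ ≤ p.card + q.card + (f p).card := by
            have := Finset.card_union_le p q; omega
        _ ≤ 6 := by rw [hpc, hqc, hfc]
    omega
  -- put it all together
  have hcard2 : (P.filter (fun p => d p = 2)).card ≤ (P.filter (fun p => d p = 0)).card :=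
    Finset.card_le_card_of_injOn f hmaps hinj
  have hsplit : ∀ p ∈ P, d p = (if d p = 2 then 1 else 0) + (if d p = 0 then 0 else 1) := by
    intro p hp
    have := hdle p hp
    split_ifs <;> omega
  calc 3 * G.card = ∑ p ∈ P, d p := hsum.symm
    _ = ∑ p ∈ P, ((if d p = 2 then 1 else 0) + (if d p = 0 then 0 else 1)) :=
        Finset.sum_congr rfl hsplit
    _ = (∑ p ∈ P, if d p = 2 then 1 else 0) + ∑ p ∈ P, if d p = 0 then 0 else 1 :=
        Finset.sum_add_distrib
    _ = (P.filter (fun p => d p = 2)).card + (P.filter (fun p => ¬ d p = 0)).card := by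
        rw [Finset.card_filter, Finset.card_filter]
        congr 1
        refine Finset.sum_congr rfl fun p _ => ?_
        by_cases h : d p = 0 <;> simp [h]
    _ ≤ (P.filter (fun p => d p = 0)).card + (P.filter (fun p => ¬ d p = 0)).card := by
        omega
    _ = P.card := Finset.card_filter_add_card_filter_not _
    _ = n.choose 2 := hPcard
end
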